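/- arXiv:2107.03273 — 7 statements merged into one kernel-verified Lean document; each statement's English description precedes it below -/
import Mathlib

section
/- Let T > 0, c₁ > 0, p > 0 and p' ≥ max(1,p). There exists a constant C < ∞, depending only on (p, p', T, c₁), such that the following holds. Let n ≥ 1; for k = 1,…,n let x^k, w^k, β ∈ C([0,T];ℝ^d) with w^k_0 = β_0 = 0, and let g^k : [0,T] → ℝ^d be Borel measurable and integrable, satisfying for all k and all t ∈ [0,T]: x^k_t = x^k_0 + ∫₀ᵗ g^k(s) ds + w^k_t + β_t, and for almost every s ∈ [0,T] and all k: |g^k(s)| ≤ c₁ ( 1 + |x^k_s| + ( (1/n) Σ_{j=1}^n |x^j_s|^p )^{1/max(1,p)} ). Then for every k = 1,…,n and every t ∈ [0,T], ‖x^k‖_t^{p'} ≤ C ( 1 + |x^k_0|^{p'} + (1/n) Σ_{j=1}^n |x^j_0|^{p'} + ‖w^k‖_t^{p'} + (1/n) Σ_{j=1}^n ‖w^j‖_t^{p'} + ‖β‖_t^{p'} ). -/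
/-!
Dominate each particle by its envelope `ψⱼ(s) = |xʲ₀| + ‖wʲ‖_t + ‖β‖_t + ∫₀ˢ |gʲ|`. With
`m = max 1 p`, the growth bound on `gʲ` and the inequality `(mean of yᵖ)^(1/m) ≤ 1 + Mₘ(y)`
(`Mₘ` the `m`-th power mean) give `ψⱼ(b) ≤ ψⱼ(a) + c₁ (b - a) (2 + ψⱼ(b) + Mₘ(ψ(b)))`. On a step
with `c₁ (b - a) ≤ 1/4`, Minkowski's inequality for `Mₘ` lets both `ψₖ(b)` and `Mₘ(ψ(b))` be
absorbed into the left-hand side, so `ψₖ + Mₘ(ψ) + 1` at most triples; after `⌈4 c₁ T⌉` steps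
one takes `p'`-th powers, using `Mₘ(a)^p' ≤ mean of a^p'` for `p' ≥ m`.
-/

open MeasureTheory Set

open scoped Interval

noncomputable section

/-- Truncated supremum norm `‖x‖_t = sup_{s ∈ [0,t]} |x_s|` of a path `x : ℝ → ℝ^d`. -/
def pathSup {d : ℕ} (x : ℝ → EuclideanSpace ℝ (Fin d)) (t : ℝ) : ℝ :=
  ⨆ s : Icc (0 : ℝ) t, ‖x s.1‖

section PathSup

variable {d : ℕ} {x : ℝ → EuclideanSpace ℝ (Fin d)} {s t c : ℝ}

lemma norm_le_pathSup (hx : Continuous x) (hs : s ∈ Icc 0 t) : ‖x s‖ ≤ pathSup x t := by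
  refine le_ciSup (f := fun r : Icc (0 : ℝ) t => ‖x r‖)
    (((isCompact_Icc (a := 0) (b := t)).image hx.norm).bddAbove.mono ?_) ⟨s, hs⟩
  rintro _ ⟨r, rfl⟩
  exact mem_image_of_mem _ r.2

lemma pathSup_le (ht : 0 ≤ t) (h : ∀ s ∈ Icc 0 t, ‖x s‖ ≤ c) : pathSup x t ≤ c :=
  have : Nonempty (Icc (0 : ℝ) t) := ⟨⟨0, le_rfl, ht⟩⟩
  ciSup_le fun s => h s s.2

lemma pathSup_nonneg (hx : Continuous x) (ht : 0 ≤ t) : 0 ≤ pathSup x t :=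
  (norm_nonneg _).trans (norm_le_pathSup hx ⟨le_rfl, ht⟩)

end PathSup

lemma rpow_add_add_le {a b c q : ℝ} (ha : 0 ≤ a) (hb : 0 ≤ b) (hc : 0 ≤ c) (hq : 1 ≤ q) :
    (a + b + c) ^ q ≤ 3 ^ (q - 1) * (a ^ q + b ^ q + c ^ q) := by
  have h := Real.rpow_sum_le_const_mul_sum_rpow_of_nonneg (s := Finset.univ) (f := ![a, b, c]) hq
    (by simp [Fin.forall_fin_succ, ha, hb, hc])
  simpa [Fin.sum_univ_three, add_assoc] using h

def powerMean {ι : Type*} [Fintype ι] (m : ℝ) (F : ι → ℝ) : ℝ :=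
  (1 / (Fintype.card ι : ℝ) * ∑ i, F i ^ m) ^ (1 / m)

section PowerMean

variable {ι : Type*} [Fintype ι] {m : ℝ} {F G : ι → ℝ}

lemma average_rpow_nonneg (hF : 0 ≤ F) (m : ℝ) : 0 ≤ 1 / (Fintype.card ι : ℝ) * ∑ i, F i ^ m :=
  mul_nonneg (by positivity) (Finset.sum_nonneg fun i _ => Real.rpow_nonneg (hF i) m)

lemma powerMean_nonneg (hF : 0 ≤ F) : 0 ≤ powerMean m F :=
  Real.rpow_nonneg (average_rpow_nonneg hF m) _

lemma powerMean_mono (hm : 0 < m) (hF : 0 ≤ F) (hFG : F ≤ G) : powerMean m F ≤ powerMean m G := by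
  refine Real.rpow_le_rpow (average_rpow_nonneg hF m) ?_ (by positivity)
  gcongr with i
  exacts [hF i, hFG i]

lemma powerMean_const [Nonempty ι] (hm : m ≠ 0) {c : ℝ} (hc : 0 ≤ c) :
    powerMean m (fun _ : ι => c) = c := by
  have hcard : (Fintype.card ι : ℝ) ≠ 0 := by positivity
  rw [powerMean, Finset.sum_const, Finset.card_univ, nsmul_eq_mul, one_div,
    inv_mul_cancel_left₀ hcard, ← Real.rpow_mul hc, mul_one_div_cancel hm, Real.rpow_one]

lemma powerMean_const_mul (hm : m ≠ 0) {c : ℝ} (hc : 0 ≤ c) (hF : 0 ≤ F) :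
    powerMean m (fun i => c * F i) = c * powerMean m F := by
  simp_rw [powerMean, Real.mul_rpow hc (hF _), ← Finset.mul_sum, mul_left_comm _ (c ^ m)]
  rw [Real.mul_rpow (Real.rpow_nonneg hc m) (average_rpow_nonneg hF m), ← Real.rpow_mul hc,
    mul_one_div_cancel hm, Real.rpow_one]

lemma powerMean_add_le (hm : 1 ≤ m) (hF : 0 ≤ F) (hG : 0 ≤ G) :
    powerMean m (F + G) ≤ powerMean m F + powerMean m G := by
  have hw : (0 : ℝ) ≤ 1 / Fintype.card ι := by positivity
  have hsum : ∀ H : ι → ℝ, 0 ≤ H → 0 ≤ ∑ i, H i ^ m := fun H hH =>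
    Finset.sum_nonneg fun i _ => Real.rpow_nonneg (hH i) m
  simp only [powerMean, Pi.add_apply]
  rw [Real.mul_rpow hw (hsum (fun i => F i + G i) (add_nonneg hF hG)), Real.mul_rpow hw (hsum F hF),
    Real.mul_rpow hw (hsum G hG), ← mul_add]
  gcongr
  exact Real.Lp_add_le_of_nonneg Finset.univ hm (fun i _ => hF i) (fun i _ => hG i)

lemma powerMean_rpow_le_average [Nonempty ι] {q : ℝ} (hm : 0 < m) (hmq : m ≤ q) (hF : 0 ≤ F) :
    powerMean m F ^ q ≤ 1 / (Fintype.card ι : ℝ) * ∑ i, F i ^ q := by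
  have hcard : (Fintype.card ι : ℝ) ≠ 0 := by positivity
  have hweights : ∑ _i : ι, 1 / (Fintype.card ι : ℝ) = 1 := by
    rw [Finset.sum_const, Finset.card_univ, nsmul_eq_mul, mul_one_div_cancel hcard]
  have hr : 1 ≤ 1 / m * q := by rw [one_div_mul_eq_div, one_le_div hm]; exact hmq
  have hpow : ∀ i, (F i ^ m) ^ (1 / m * q) = F i ^ q := fun i => by
    rw [← Real.rpow_mul (hF i), ← mul_assoc, mul_one_div_cancel hm.ne', one_mul]
  rw [powerMean, ← Real.rpow_mul (average_rpow_nonneg hF m), Finset.mul_sum, Finset.mul_sum]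
  simpa only [hpow] using Real.rpow_arith_mean_le_arith_mean_rpow Finset.univ _ (fun i => F i ^ m)
    (fun _ _ => by positivity) hweights (fun i _ => Real.rpow_nonneg (hF i) m) hr

lemma average_rpow_rpow_le_one_add_powerMean [Nonempty ι] {p : ℝ} (hp : 0 ≤ p) (hpm : p ≤ m)
    (hm : 1 ≤ m) (hF : 0 ≤ F) (hFG : F ≤ G) :
    (1 / (Fintype.card ι : ℝ) * ∑ i, F i ^ p) ^ (1 / m) ≤ 1 + powerMean m G := by
  have hG : 0 ≤ G := hF.trans hFG
  have hcard : (Fintype.card ι : ℝ) ≠ 0 := by positivity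
  have hpoint : ∀ i, F i ^ p ≤ 1 + G i ^ m := fun i => by
    rcases le_total (G i) 1 with h | h
    · linarith [Real.rpow_le_one (hF i) ((hFG i).trans h) hp, Real.rpow_nonneg (hG i) m]
    · linarith [Real.rpow_le_rpow (hF i) (hFG i) hp, Real.rpow_le_rpow_of_exponent_le h hpm]
  have havg : 1 / (Fintype.card ι : ℝ) * ∑ i, F i ^ p ≤
      1 + 1 / (Fintype.card ι : ℝ) * ∑ i, G i ^ m := by
    calc 1 / (Fintype.card ι : ℝ) * ∑ i, F i ^ p
        ≤ 1 / (Fintype.card ι : ℝ) * ∑ i, (1 + G i ^ m) := by gcongr with i; exact hpoint i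
      _ = 1 + 1 / (Fintype.card ι : ℝ) * ∑ i, G i ^ m := by
        rw [Finset.sum_add_distrib, Finset.sum_const, Finset.card_univ, nsmul_eq_mul, mul_add,
          mul_one, one_div_mul_cancel hcard]
  calc (1 / (Fintype.card ι : ℝ) * ∑ i, F i ^ p) ^ (1 / m)
      ≤ (1 + 1 / (Fintype.card ι : ℝ) * ∑ i, G i ^ m) ^ (1 / m) :=
        Real.rpow_le_rpow (average_rpow_nonneg hF p) havg (by positivity)
    _ ≤ 1 ^ (1 / m) + powerMean m G :=
        Real.rpow_add_le_add_rpow zero_le_one (average_rpow_nonneg hG m) (by positivity)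
          ((div_le_one (by positivity)).2 hm)
    _ = 1 + powerMean m G := by rw [Real.one_rpow]

lemma average_rpow_add_add_le [Nonempty ι] {a b : ι → ℝ} {c q : ℝ} (ha : 0 ≤ a) (hb : 0 ≤ b)
    (hc : 0 ≤ c) (hq : 1 ≤ q) :
    1 / (Fintype.card ι : ℝ) * ∑ i, (a i + b i + c) ^ q ≤ 3 ^ (q - 1) *
      (1 / (Fintype.card ι : ℝ) * ∑ i, a i ^ q + 1 / (Fintype.card ι : ℝ) * ∑ i, b i ^ q
        + c ^ q) := by
  have hcard : (Fintype.card ι : ℝ) ≠ 0 := by positivity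
  calc 1 / (Fintype.card ι : ℝ) * ∑ i, (a i + b i + c) ^ q
      ≤ 1 / (Fintype.card ι : ℝ) * ∑ i, 3 ^ (q - 1) * (a i ^ q + b i ^ q + c ^ q) := by
        gcongr with i
        exact rpow_add_add_le (ha i) (hb i) hc hq
    _ = _ := by
        rw [← Finset.mul_sum, Finset.sum_add_distrib, Finset.sum_add_distrib, Finset.sum_const,
          Finset.card_univ, nsmul_eq_mul]
        field_simp

lemma rpow_le_of_le_mul_add_powerMean [Nonempty ι] {X W : ι → ℝ} {B y K m q : ℝ} (hX : 0 ≤ X)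
    (hW : 0 ≤ W) (hB : 0 ≤ B) (hy : 0 ≤ y) (hK : 0 ≤ K) (hm : 1 ≤ m) (hmq : m ≤ q) (k : ι)
    (h : y ≤ K * (X k + W k + B + powerMean m (fun j => X j + W j + B) + 1)) :
    y ^ q ≤ 2 * K ^ q * (3 ^ (q - 1)) ^ 2 * (1 + X k ^ q
      + 1 / (Fintype.card ι : ℝ) * ∑ j, X j ^ q + W k ^ q
      + 1 / (Fintype.card ι : ℝ) * ∑ j, W j ^ q + B ^ q) := by
  set A := fun j => X j + W j + B
  set Q : ℝ := 3 ^ (q - 1)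
  set avgX := 1 / (Fintype.card ι : ℝ) * ∑ j, X j ^ q
  set avgW := 1 / (Fintype.card ι : ℝ) * ∑ j, W j ^ q
  have hq : 1 ≤ q := hm.trans hmq
  have hA : 0 ≤ A := fun j => add_nonneg (add_nonneg (hX j) (hW j)) hB
  have hAk : 0 ≤ A k := hA k
  have hM : 0 ≤ powerMean m A := powerMean_nonneg hA
  have hQ : 1 ≤ Q := Real.one_le_rpow (by norm_num) (by linarith)
  have hAkq : A k ^ q ≤ Q * (X k ^ q + W k ^ q + B ^ q) := rpow_add_add_le (hX k) (hW k) hB hq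
  have hMq : powerMean m A ^ q ≤ Q * (avgX + avgW + B ^ q) :=
    (powerMean_rpow_le_average (by linarith) hmq hA).trans (average_rpow_add_add_le hX hW hB hq)
  have hsum : X k ^ q + W k ^ q + B ^ q + (avgX + avgW + B ^ q) + 1
      ≤ 2 * (1 + X k ^ q + avgX + W k ^ q + avgW + B ^ q) := by
    linarith [Real.rpow_nonneg (hX k) q, Real.rpow_nonneg (hW k) q, average_rpow_nonneg hX q,
      average_rpow_nonneg hW q]
  calc y ^ q ≤ (K * (A k + powerMean m A + 1)) ^ q := Real.rpow_le_rpow hy h (by linarith)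
    _ = K ^ q * (A k + powerMean m A + 1) ^ q := Real.mul_rpow hK (by linarith)
    _ ≤ K ^ q * (Q * (A k ^ q + powerMean m A ^ q + 1)) := by
        gcongr
        simpa using rpow_add_add_le hAk hM zero_le_one hq
    _ ≤ K ^ q * (Q * (Q * (X k ^ q + W k ^ q + B ^ q) + Q * (avgX + avgW + B ^ q) + Q)) := by
        gcongr
    _ = K ^ q * Q ^ 2 * (X k ^ q + W k ^ q + B ^ q + (avgX + avgW + B ^ q) + 1) := by ring
    _ ≤ K ^ q * Q ^ 2 * (2 * (1 + X k ^ q + avgX + W k ^ q + avgW + B ^ q)) := by gcongr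
    _ = _ := by ring

end PowerMean

section Gronwall

variable {ι : Type*} [Fintype ι] [Nonempty ι] {m : ℝ}

lemma add_powerMean_le_three_mul (hm : 1 ≤ m) {u v : ι → ℝ} (hu : 0 ≤ u) (hv : 0 ≤ v) {ε : ℝ}
    (hε0 : 0 ≤ ε) (hε : ε ≤ 1 / 4) (h : ∀ i, v i ≤ u i + ε * (2 + v i + powerMean m v))
    (k : ι) : v k + powerMean m v + 1 ≤ 3 * (u k + powerMean m u + 1) := by
  have hm0 : m ≠ 0 := (zero_lt_one.trans_le hm).ne'
  set V := powerMean m v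
  have hV : 0 ≤ V := powerMean_nonneg hv
  have hεv : 0 ≤ fun i => ε * v i := fun i => mul_nonneg hε0 (hv i)
  have hmean : V ≤ powerMean m u + ε * V + ε * (2 + V) :=
    calc V ≤ powerMean m ((u + fun i => ε * v i) + fun _ => ε * (2 + V)) :=
          powerMean_mono (by linarith) hv fun i => by
            simp only [Pi.add_apply]; linarith [h i]
      _ ≤ powerMean m (u + fun i => ε * v i) + ε * (2 + V) :=
          (powerMean_add_le hm (add_nonneg hu hεv) fun _ => by positivity).trans_eq
            (by rw [powerMean_const hm0 (by positivity)])
      _ ≤ powerMean m u + ε * V + ε * (2 + V) := by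
          rw [← powerMean_const_mul hm0 hε0 hv]
          gcongr
          exact powerMean_add_le hm hu hεv
  have hεV : ε * V ≤ 1 / 4 * V := mul_le_mul_of_nonneg_right hε hV
  have hεvk : ε * v k ≤ 1 / 4 * v k := mul_le_mul_of_nonneg_right hε (hv k)
  have huk : 0 ≤ u k := hu k
  have hU : 0 ≤ powerMean m u := powerMean_nonneg hu
  have hk := h k
  -- `hmean` gives `V ≤ 2 Mₘ(u) + 1`, and then `hk` gives `v k ≤ (4/3) u k + 1 + (2/3) Mₘ(u)`.
  linarith

lemma le_pow_mul_of_le_mul {E : ℝ → ℝ} {t δ K : ℝ} (hδ : 0 ≤ δ) (hK : 0 ≤ K)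
    (h : ∀ a b, 0 ≤ a → a ≤ b → b ≤ t → b ≤ a + δ → E b ≤ K * E a) :
    ∀ (N : ℕ) {s : ℝ}, s ∈ Icc 0 t → s ≤ N * δ → E s ≤ K ^ N * E 0
  | 0, s, hs, hsN => by
    obtain rfl : s = 0 := le_antisymm (by simpa using hsN) hs.1
    simp
  | N + 1, s, hs, hsN => by
    have has : max 0 (s - δ) ≤ s := max_le hs.1 (by linarith)
    have haN : max 0 (s - δ) ≤ N * δ := max_le (by positivity) (by push_cast at hsN; linarith)
    calc E s ≤ K * E (max 0 (s - δ)) :=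
          h _ _ (le_max_left _ _) has hs.2 (by linarith [le_max_right 0 (s - δ)])
      _ ≤ K * (K ^ N * E 0) := by
          gcongr
          exact le_pow_mul_of_le_mul hδ hK h N ⟨le_max_left _ _, has.trans hs.2⟩ haN
      _ = K ^ (N + 1) * E 0 := by ring

lemma add_powerMean_le_three_pow_mul {ψ : ℝ → ι → ℝ} {c t : ℝ} (hm : 1 ≤ m) (hc : 0 < c)
    (hψ : ∀ s ∈ Icc 0 t, 0 ≤ ψ s)
    (hinc : ∀ a b, 0 ≤ a → a ≤ b → b ≤ t →
      ∀ i, ψ b i ≤ ψ a i + c * (b - a) * (2 + ψ b i + powerMean m (ψ b)))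
    (k : ι) {N : ℕ} (ht : 0 ≤ t) (hN : 4 * c * t ≤ N) :
    ψ t k + powerMean m (ψ t) + 1 ≤ 3 ^ N * (ψ 0 k + powerMean m (ψ 0) + 1) := by
  refine le_pow_mul_of_le_mul (E := fun s => ψ s k + powerMean m (ψ s) + 1)
    (δ := 1 / (4 * c)) (by positivity) (by norm_num) (fun a b ha hab hbt hba => ?_) N
    ⟨ht, le_rfl⟩ ?_
  · have hstep : c * (b - a) ≤ 1 / 4 :=
      calc c * (b - a) ≤ c * (1 / (4 * c)) := by gcongr; linarith
        _ = 1 / 4 := by field_simp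
    exact add_powerMean_le_three_mul hm (hψ a ⟨ha, hab.trans hbt⟩) (hψ b ⟨ha.trans hab, hbt⟩)
      (mul_nonneg hc.le (by linarith)) hstep (hinc a b ha hab hbt) k
  · rw [mul_one_div, le_div_iff₀ (by positivity)]
    linarith

end Gronwall

section ParticleSystem

variable {ι : Type*} {d : ℕ} {x w g : ι → ℝ → EuclideanSpace ℝ (Fin d)}
  {β : ℝ → EuclideanSpace ℝ (Fin d)} {T t a b r s : ℝ}

def envelope (x w : ι → ℝ → EuclideanSpace ℝ (Fin d)) (β : ℝ → EuclideanSpace ℝ (Fin d))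
    (g : ι → ℝ → EuclideanSpace ℝ (Fin d)) (t s : ℝ) (j : ι) : ℝ :=
  ‖x j 0‖ + pathSup (w j) t + pathSup β t + ∫ r in (0 : ℝ)..s, ‖g j r‖

lemma envelope_zero :
    envelope x w β g t 0 = fun j => ‖x j 0‖ + pathSup (w j) t + pathSup β t := by
  ext j
  simp [envelope]

lemma envelope_nonneg (hw : ∀ j, Continuous (w j)) (hβ : Continuous β) (ht : 0 ≤ t)
    (hs : 0 ≤ s) : 0 ≤ envelope x w β g t s := fun j => by
  have := pathSup_nonneg (hw j) ht
  have := pathSup_nonneg hβ ht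
  have := intervalIntegral.integral_nonneg (μ := volume) hs fun r _ => norm_nonneg (g j r)
  simp only [envelope, Pi.zero_apply]
  positivity

lemma norm_le_envelope (hw : ∀ j, Continuous (w j)) (hβ : Continuous β)
    (hx : ∀ j, ∀ s ∈ Icc 0 T, x j s = x j 0 + (∫ r in (0 : ℝ)..s, g j r) + w j s + β s)
    (htT : t ≤ T) (hr : r ∈ Icc 0 t) (j : ι) : ‖x j r‖ ≤ envelope x w β g t r j := by
  rw [hx j r ⟨hr.1, hr.2.trans htT⟩, envelope]
  have := intervalIntegral.norm_integral_le_integral_norm (f := g j) (μ := volume) hr.1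
  have := norm_le_pathSup (hw j) hr
  have := norm_le_pathSup hβ hr
  have : ‖x j 0 + (∫ r in (0 : ℝ)..r, g j r) + w j r + β r‖
      ≤ ‖x j 0‖ + ‖∫ r in (0 : ℝ)..r, g j r‖ + ‖w j r‖ + ‖β r‖ := norm_add₄_le
  linarith

lemma envelope_sub_envelope {j : ι} (hg : IntervalIntegrable (g j) volume 0 T) (ha : 0 ≤ a)
    (hab : a ≤ b) (hbT : b ≤ T) :
    envelope x w β g t b j - envelope x w β g t a j = ∫ r in a..b, ‖g j r‖ := by
  have hint : ∀ s ∈ Icc 0 T, IntervalIntegrable (fun r => ‖g j r‖) volume 0 s := fun s hs => by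
    refine (hg.mono_set ?_).norm
    rw [uIcc_of_le hs.1, uIcc_of_le (hs.1.trans hs.2)]
    exact Icc_subset_Icc le_rfl hs.2
  rw [← intervalIntegral.integral_interval_sub_left (hint b ⟨ha.trans hab, hbT⟩)
    (hint a ⟨ha, hab.trans hbT⟩), envelope, envelope]
  ring

lemma envelope_mono {j : ι} (hg : IntervalIntegrable (g j) volume 0 T) (ha : 0 ≤ a)
    (hab : a ≤ b) (hbT : b ≤ T) : envelope x w β g t a j ≤ envelope x w β g t b j := by
  rw [← sub_nonneg, envelope_sub_envelope hg ha hab hbT]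
  exact intervalIntegral.integral_nonneg hab fun r _ => norm_nonneg _

lemma envelope_le_add_mul [Fintype ι] [Nonempty ι] {c₁ p : ℝ} (hc₁ : 0 ≤ c₁) (hp : 0 ≤ p)
    (hw : ∀ j, Continuous (w j)) (hβ : Continuous β)
    (hg : ∀ j, IntervalIntegrable (g j) volume 0 T)
    (hx : ∀ j, ∀ s ∈ Icc 0 T, x j s = x j 0 + (∫ r in (0 : ℝ)..s, g j r) + w j s + β s)
    (hgb : ∀ᵐ s ∂(volume.restrict (Icc (0 : ℝ) T)), ∀ j, ‖g j s‖ ≤ c₁ * (1 + ‖x j s‖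
      + (1 / (Fintype.card ι : ℝ) * ∑ i, ‖x i s‖ ^ p) ^ (1 / max 1 p)))
    (htT : t ≤ T) (ha : 0 ≤ a) (hab : a ≤ b) (hbt : b ≤ t) (j : ι) :
    envelope x w β g t b j ≤ envelope x w β g t a j + c₁ * (b - a) *
      (2 + envelope x w β g t b j + powerMean (max 1 p) (envelope x w β g t b)) := by
  set ψ := envelope x w β g t
  have hbound : ∀ᵐ r, r ∈ Ι a b → ‖‖g j r‖‖ ≤ c₁ * (2 + ψ b j + powerMean (max 1 p) (ψ b)) := by
    filter_upwards [(ae_restrict_iff' measurableSet_Icc).1 hgb] with r hgr hr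
    rw [uIoc_of_le hab] at hr
    have hr0 : 0 ≤ r := ha.trans hr.1.le
    have hxψ : ∀ i, ‖x i r‖ ≤ ψ b i := fun i =>
      (norm_le_envelope hw hβ hx htT ⟨hr0, hr.2.trans hbt⟩ i).trans
        (envelope_mono (hg i) hr0 hr.2 (hbt.trans htT))
    have hmean := average_rpow_rpow_le_one_add_powerMean hp (le_max_right 1 p) (le_max_left 1 p)
      (fun i => norm_nonneg (x i r)) hxψ
    rw [norm_norm]
    refine (hgr ⟨hr0, hr.2.trans (hbt.trans htT)⟩ j).trans ?_
    exact mul_le_mul_of_nonneg_left (by linarith [hxψ j]) hc₁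
  rw [← sub_le_iff_le_add', envelope_sub_envelope (hg j) ha hab (hbt.trans htT)]
  calc ∫ r in a..b, ‖g j r‖
      ≤ ‖∫ r in a..b, ‖g j r‖‖ := Real.le_norm_self _
    _ ≤ c₁ * (2 + ψ b j + powerMean (max 1 p) (ψ b)) * |b - a| :=
        intervalIntegral.norm_integral_le_of_norm_le_const_ae hbound
    _ = c₁ * (b - a) * (2 + ψ b j + powerMean (max 1 p) (ψ b)) := by
        rw [abs_of_nonneg (sub_nonneg.2 hab)]
        ring

end ParticleSystem

theorem particle_system_pathwise_estimate_general
    (T c₁ p p' : ℝ) (hc₁ : 0 < c₁) (hp : 0 < p) (hp' : max 1 p ≤ p') :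
    ∃ C : ℝ, ∀ (d : ℕ) (n : ℕ), 1 ≤ n →
      ∀ (x w : Fin n → ℝ → EuclideanSpace ℝ (Fin d)) (β : ℝ → EuclideanSpace ℝ (Fin d))
        (g : Fin n → ℝ → EuclideanSpace ℝ (Fin d)),
      (∀ k, Continuous (x k)) → (∀ k, Continuous (w k)) → Continuous β →
      (∀ k, w k 0 = 0) → β 0 = 0 →
      (∀ k, IntervalIntegrable (g k) volume 0 T) →
      (∀ k, ∀ t ∈ Icc (0 : ℝ) T,
        x k t = x k 0 + (∫ s in (0 : ℝ)..t, g k s) + w k t + β t) →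
      (∀ᵐ s ∂(volume.restrict (Icc (0 : ℝ) T)), ∀ k,
        ‖g k s‖ ≤ c₁ * (1 + ‖x k s‖
          + ((1 / (n : ℝ)) * ∑ j : Fin n, ‖x j s‖ ^ p) ^ (1 / max 1 p))) →
      ∀ k, ∀ t ∈ Icc (0 : ℝ) T,
        pathSup (x k) t ^ p' ≤ C * (1 + ‖x k 0‖ ^ p'
          + (1 / (n : ℝ)) * ∑ j : Fin n, ‖x j 0‖ ^ p'
          + pathSup (w k) t ^ p'
          + (1 / (n : ℝ)) * ∑ j : Fin n, pathSup (w j) t ^ p'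
          + pathSup β t ^ p') := by
  set N := ⌈4 * c₁ * T⌉₊
  refine ⟨2 * ((3 : ℝ) ^ N) ^ p' * (3 ^ (p' - 1)) ^ 2, ?_⟩
  intro d n hn x w β g hx hw hβ _ _ hg hxeq hgb k t ht
  have : Nonempty (Fin n) := ⟨⟨0, hn⟩⟩
  have hgronwall := add_powerMean_le_three_pow_mul (ψ := envelope x w β g t) (N := N)
    (le_max_left 1 p) hc₁ (fun s hs => envelope_nonneg hw hβ ht.1 hs.1)
    (fun a b ha hab hbt => envelope_le_add_mul hc₁.le hp.le hw hβ hg hxeq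
      (by simpa only [Fintype.card_fin] using hgb) ht.2 ha hab hbt)
    k ht.1 ((mul_le_mul_of_nonneg_left ht.2 (by positivity)).trans (Nat.le_ceil _))
  rw [envelope_zero] at hgronwall
  have hsup : pathSup (x k) t ≤ envelope x w β g t t k :=
    pathSup_le ht.1 fun r hr => (norm_le_envelope hw hβ hxeq ht.2 hr k).trans
      (envelope_mono (hg k) hr.1 hr.2 ht.2)
  have hmean : 0 ≤ powerMean (max 1 p) (envelope x w β g t t) :=
    powerMean_nonneg (envelope_nonneg hw hβ ht.1 ht.1)
  simpa only [Fintype.card_fin] using rpow_le_of_le_mul_add_powerMean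
    (fun j => norm_nonneg (x j 0)) (fun j => pathSup_nonneg (hw j) ht.1) (pathSup_nonneg hβ ht.1)
    (pathSup_nonneg (hx k) ht.1) (by positivity) (le_max_left 1 p) hp' k (by linarith)

/-- Pathwise Gronwall-type estimate for interacting particle systems: individual bound. -/
theorem particle_system_pathwise_estimate
    (T c₁ p p' : ℝ) (hT : 0 < T) (hc₁ : 0 < c₁) (hp : 0 < p) (hp' : max 1 p ≤ p') :
    ∃ C : ℝ, ∀ (d : ℕ) (n : ℕ), 1 ≤ n →
      ∀ (x w : Fin n → ℝ → EuclideanSpace ℝ (Fin d)) (β : ℝ → EuclideanSpace ℝ (Fin d))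
        (g : Fin n → ℝ → EuclideanSpace ℝ (Fin d)),
      (∀ k, Continuous (x k)) → (∀ k, Continuous (w k)) → Continuous β →
      (∀ k, w k 0 = 0) → β 0 = 0 →
      (∀ k, IntervalIntegrable (g k) volume 0 T) →
      (∀ k, ∀ t ∈ Icc (0 : ℝ) T,
        x k t = x k 0 + (∫ s in (0 : ℝ)..t, g k s) + w k t + β t) →
      (∀ᵐ s ∂(volume.restrict (Icc (0 : ℝ) T)), ∀ k,
        ‖g k s‖ ≤ c₁ * (1 + ‖x k s‖
          + ((1 / (n : ℝ)) * ∑ j : Fin n, ‖x j s‖ ^ p) ^ (1 / max 1 p))) →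
      ∀ k, ∀ t ∈ Icc (0 : ℝ) T,
        pathSup (x k) t ^ p' ≤ C * (1 + ‖x k 0‖ ^ p'
          + (1 / (n : ℝ)) * ∑ j : Fin n, ‖x j 0‖ ^ p'
          + pathSup (w k) t ^ p'
          + (1 / (n : ℝ)) * ∑ j : Fin n, pathSup (w j) t ^ p'
          + pathSup β t ^ p') :=
  particle_system_pathwise_estimate_general T c₁ p p' hc₁ hp hp'

end
end

section
/- Let (𝒎_n)_{n∈ℕ} and 𝒎 be Borel probability measures on 𝒞^d such that 𝒎_n → 𝒎 in the topology of weak convergence. Then the marginal flows converge uniformly in the Lévy–Prokhorov metric: sup_{t∈[0,T]} d_LP(m_{n,t}, m_t) → 0 as n → ∞. Consequently, the map sending 𝒎 ∈ 𝒫(𝒞^d) (weak topology) to its marginal flow (m_t)_{t∈[0,T]} ∈ C([0,T]; (𝒫(ℝ^d), d_LP)) (supremum metric) is continuous. -/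
open MeasureTheory Set Filter
open scoped UniformConvergence

/-! Each time marginal is the pushforward under the evaluation at time `t`, which is 1-Lipschitz for
the sup metric on paths; and pushing forward by a 1-Lipschitz map cannot increase the Lévy–Prokhorov
distance, since it maps the `ε`-thickening of `f ⁻¹' B` into `f ⁻¹'` of the `ε`-thickening of `B`.
So `d_LP(m_{n,t}, m_t) ≤ d_LP(𝒎_n, 𝒎)` uniformly in `t`, and the right-hand side tends to zero
because the Lévy–Prokhorov metric metrizes weak convergence on the separable space of paths. The same bound makes the marginal-flow map 1-Lipschitz from
the Lévy–Prokhorov metric on path measures, hence continuous. -/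

lemma thickening_preimage_subset_preimage_thickening {X Y : Type*}
    [PseudoEMetricSpace X] [PseudoEMetricSpace Y] {f : X → Y} (hf : LipschitzWith 1 f)
    (δ : ℝ) (B : Set Y) :
    Metric.thickening δ (f ⁻¹' B) ⊆ f ⁻¹' Metric.thickening δ B := by
  intro x hx
  obtain ⟨z, hz, hxz⟩ := (Metric.mem_thickening_iff_exists_edist_lt _ _).mp hx
  exact (Metric.mem_thickening_iff_exists_edist_lt _ _).mpr
    ⟨f z, hz, lt_of_le_of_lt (by simpa using hf.edist_le_mul x z) hxz⟩

lemma levyProkhorovEDist_map_le {X Y : Type*}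
    [MeasurableSpace X] [PseudoEMetricSpace X] [OpensMeasurableSpace X]
    [MeasurableSpace Y] [PseudoEMetricSpace Y] [BorelSpace Y]
    (μ ν : Measure X) {f : X → Y} (hf : LipschitzWith 1 f) :
    levyProkhorovEDist (μ.map f) (ν.map f) ≤ levyProkhorovEDist μ ν := by
  refine levyProkhorovEDist_le_of_forall _ _ _ fun ε B hε _ hB => ?_
  have hfm : Measurable f := hf.continuous.measurable
  have hthick := thickening_preimage_subset_preimage_thickening hf ε.toReal B
  rw [Measure.map_apply hfm hB, Measure.map_apply hfm Metric.isOpen_thickening.measurableSet,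
    Measure.map_apply hfm hB, Measure.map_apply hfm Metric.isOpen_thickening.measurableSet]
  constructor
  · calc μ (f ⁻¹' B) ≤ ν (Metric.thickening ε.toReal (f ⁻¹' B)) + ε :=
          left_measure_le_of_levyProkhorovEDist_lt hε (hfm hB)
      _ ≤ ν (f ⁻¹' Metric.thickening ε.toReal B) + ε := by gcongr
  · calc ν (f ⁻¹' B) ≤ μ (Metric.thickening ε.toReal (f ⁻¹' B)) + ε :=
          right_measure_le_of_levyProkhorovEDist_lt hε (hfm hB)
      _ ≤ μ (f ⁻¹' Metric.thickening ε.toReal B) + ε := by gcongr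

lemma LevyProkhorov.lipschitzWith_one_map {X Y : Type*}
    [MeasurableSpace X] [PseudoMetricSpace X] [OpensMeasurableSpace X]
    [MeasurableSpace Y] [PseudoMetricSpace Y] [BorelSpace Y]
    {f : X → Y} (hf : LipschitzWith 1 f) :
    LipschitzWith 1 fun P : LevyProkhorov (ProbabilityMeasure X) =>
      LevyProkhorov.ofMeasure (P.toMeasure.map hf.continuous.measurable.aemeasurable) := by
  refine LipschitzWith.of_edist_le fun P Q => ?_
  simp only [LevyProkhorov.edist_probabilityMeasure_def, ProbabilityMeasure.toMeasure_map]
  exact levyProkhorovEDist_map_le _ _ hf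

lemma ContinuousMap.lipschitzWith_one_eval {α β : Type*} [TopologicalSpace α] [CompactSpace α]
    [PseudoMetricSpace β] (t : α) :
    LipschitzWith 1 fun x : C(α, β) => x t :=
  LipschitzWith.of_dist_le_mul fun x y => by simpa using ContinuousMap.dist_apply_le_dist t

theorem marginal_flows_converge_uniformly_general
    (d : ℕ) (T : ℝ)
    [MeasurableSpace C(Icc (0 : ℝ) T, EuclideanSpace ℝ (Fin d))]
    [BorelSpace C(Icc (0 : ℝ) T, EuclideanSpace ℝ (Fin d))]
    (m : ℕ → ProbabilityMeasure C(Icc (0 : ℝ) T, EuclideanSpace ℝ (Fin d)))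
    (m₀ : ProbabilityMeasure C(Icc (0 : ℝ) T, EuclideanSpace ℝ (Fin d)))
    (hconv : Tendsto m atTop (nhds m₀)) :
    Tendsto (fun n => ⨆ t : Icc (0 : ℝ) T,
        levyProkhorovDist
          (((m n).map (f := fun x => x t)
            (continuous_eval_const t).measurable.aemeasurable).toMeasure)
          ((m₀.map (f := fun x => x t)
            (continuous_eval_const t).measurable.aemeasurable).toMeasure))
      atTop (nhds 0)
    ∧ Continuous (fun ν : ProbabilityMeasure C(Icc (0 : ℝ) T, EuclideanSpace ℝ (Fin d)) =>
        (UniformFun.ofFun (fun t : Icc (0 : ℝ) T =>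
          (LevyProkhorov.toMeasureEquiv (α := ProbabilityMeasure (EuclideanSpace ℝ (Fin d)))).symm
            (ν.map (f := fun x => x t)
              (continuous_eval_const t).measurable.aemeasurable)) :
          Icc (0 : ℝ) T →ᵤ LevyProkhorov (ProbabilityMeasure (EuclideanSpace ℝ (Fin d))))) := by
  let toLP := LevyProkhorov.probabilityMeasureHomeomorph
    (Ω := C(Icc (0 : ℝ) T, EuclideanSpace ℝ (Fin d)))
  have hmarginal (t : Icc (0 : ℝ) T) :=
    LevyProkhorov.lipschitzWith_one_map (ContinuousMap.lipschitzWith_one_eval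
      (β := EuclideanSpace ℝ (Fin d)) t)
  have hLP : Tendsto (fun n => dist (toLP (m n)) (toLP m₀)) atTop (nhds 0) :=
    tendsto_iff_dist_tendsto_zero.mp ((toLP.continuous.tendsto m₀).comp hconv)
  constructor
  · refine squeeze_zero (fun n => Real.iSup_nonneg fun t => ENNReal.toReal_nonneg)
      (fun n => Real.iSup_le (fun t => ?_) dist_nonneg) hLP
    have h := (hmarginal t).dist_le_mul (toLP (m n)) (toLP m₀)
    rwa [NNReal.coe_one, one_mul, LevyProkhorov.dist_probabilityMeasure_def] at h
  · exact (UniformFun.lipschitzWith_ofFun_iff.mpr hmarginal).continuous.comp toLP.continuous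

/-- Weak convergence on path space implies uniform (in time) convergence of the marginal
flows in the Lévy–Prokhorov metric; consequently the marginal-flow map is continuous into
the space of continuous measure flows with the uniform topology. -/
theorem marginal_flows_converge_uniformly
    (d : ℕ) (T : ℝ) (hT : 0 < T)
    [MeasurableSpace C(Icc (0 : ℝ) T, EuclideanSpace ℝ (Fin d))]
    [BorelSpace C(Icc (0 : ℝ) T, EuclideanSpace ℝ (Fin d))]
    (m : ℕ → ProbabilityMeasure C(Icc (0 : ℝ) T, EuclideanSpace ℝ (Fin d)))
    (m₀ : ProbabilityMeasure C(Icc (0 : ℝ) T, EuclideanSpace ℝ (Fin d)))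
    (hconv : Tendsto m atTop (nhds m₀)) :
    Tendsto (fun n => ⨆ t : Icc (0 : ℝ) T,
        levyProkhorovDist
          (((m n).map (f := fun x => x t)
            (continuous_eval_const t).measurable.aemeasurable).toMeasure)
          ((m₀.map (f := fun x => x t)
            (continuous_eval_const t).measurable.aemeasurable).toMeasure))
      atTop (nhds 0)
    ∧ Continuous (fun ν : ProbabilityMeasure C(Icc (0 : ℝ) T, EuclideanSpace ℝ (Fin d)) =>
        (UniformFun.ofFun (fun t : Icc (0 : ℝ) T =>
          (LevyProkhorov.toMeasureEquiv (α := ProbabilityMeasure (EuclideanSpace ℝ (Fin d)))).symm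
            (ν.map (f := fun x => x t)
              (continuous_eval_const t).measurable.aemeasurable)) :
          Icc (0 : ℝ) T →ᵤ LevyProkhorov (ProbabilityMeasure (EuclideanSpace ℝ (Fin d))))) :=
  marginal_flows_converge_uniformly_general d T m m₀ hconv
end

section
/- Let ψ : [0,T] × ℝ^d × 𝒫(ℝ^d) × A → ℝ be bounded and jointly Borel measurable, such that for each fixed t ∈ [0,T] the map (x, m, a) ↦ ψ(t, x, m, a) is continuous (with 𝒫(ℝ^d) carrying the weak topology). Then the functional Φ : 𝒫(𝒞^d × 𝒱) → ℝ defined by Φ(𝒎̄) = ∫_{𝒞^d × 𝒱} ( ∫_{[0,T]×A} ψ(t, x_t, m_t, a) q(dt, da) ) 𝒎̄(dx, dq), where m_t ∈ 𝒫(ℝ^d) denotes the pushforward of 𝒎̄ under the map (x,q) ↦ x_t, is continuous with respect to the topology of weak convergence on 𝒫(𝒞^d × 𝒱). -/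
/-!
Write `Φ(m) = ∫ G_m dm` with `G_m(x, q) = ∫ ψ(t, x_t, m_t, a) q(dt, da)`. Fix `m₀` and `ε`, and a
radius `R` with `m₀ {‖x‖ ≥ R} < ε`; this closed set has mass `< ε` for all `m` near `m₀` too.
On `{‖x‖ < R}` only the sections `ψ(t, ·, ν, ·)` restricted to the compact set `B_R × A` matter,
and since every relaxed control has the normalized Lebesgue measure `λ` as first marginal,
`|G_m - G_{m₀}| ≤ ∫ ‖ψ(t, ·, m_t, ·) - ψ(t, ·, m₀_t, ·)‖ dλ(t)` there; this tends to `0` by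
dominated convergence, because `m ↦ m_t` is continuous. Approximating `t ↦ ψ(t, ·, m₀_t, ·)` in
`L¹(λ; C(B_R × A))` by a continuous function of `t` makes `G_{m₀}` uniformly close on
`{‖x‖ < R}` to a bounded continuous function of `(x, q)`, against which `m → m₀` can be tested.
-/

open MeasureTheory Set
open scoped ENNReal

noncomputable section

/-- The set `𝒱` of relaxed controls: Borel probability measures on `[0,T] × A` whose
first marginal is the normalized Lebesgue measure on `[0,T]`. -/
abbrev RelaxedControls (T : ℝ) (A : Type)
    [TopologicalSpace A] [MeasurableSpace A] : Type :=
  {q : ProbabilityMeasure (Icc (0 : ℝ) T × A) //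
    q.toMeasure.map Prod.fst =
      (ENNReal.ofReal T)⁻¹ • (Measure.comap Subtype.val (volume : Measure ℝ))}

open Filter Topology TopologicalSpace
open scoped BoundedContinuousFunction

theorem measurable_of_measurable_dist {α Y : Type*} [MeasurableSpace α] [PseudoMetricSpace Y]
    [SecondCountableTopology Y] [MeasurableSpace Y] [BorelSpace Y] {f : α → Y}
    (hf : ∀ y, Measurable fun a => dist (f a) y) : Measurable f := by
  refine measurable_of_isOpen fun U hU => ?_
  choose! r hr hrU using fun y (hy : y ∈ U) => Metric.isOpen_iff.1 hU y hy
  obtain ⟨S, -, hS, hSU⟩ := isOpen_biUnion_countable U (fun y => Metric.ball y (r y))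
    fun y _ => Metric.isOpen_ball
  have hU : U = ⋃ y ∈ S, Metric.ball y (r y) := by
    rw [hSU]
    exact (iUnion₂_subset hrU).antisymm' fun y hy => mem_biUnion hy (Metric.mem_ball_self (hr y hy))
  rw [hU, preimage_iUnion₂]
  exact .biUnion hS fun y _ => measurableSet_lt (hf y) measurable_const

namespace ContinuousMap

variable {α K E : Type*} [MeasurableSpace α] [NormedAddCommGroup E] [MeasurableSpace E]

theorem measurable_norm_of_measurable_apply [TopologicalSpace K] [CompactSpace K]
    [SeparableSpace K] [OpensMeasurableSpace E] {f : α → C(K, E)}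
    (hf : ∀ k, Measurable fun a => f a k) : Measurable fun a => ‖f a‖ := by
  obtain ⟨S, hS, hSdense⟩ := exists_countable_dense K
  have : Countable S := hS.to_subtype
  have hnorm : ∀ a, ‖f a‖ = ⨆ k : S, ‖f a k‖ := fun a => by
    rw [norm_eq_iSup_norm, hSdense.ciSup' (f a).continuous.norm]
  simp_rw [hnorm]
  exact .iSup fun k => (hf k).norm

theorem measurable_of_measurable_apply [MetricSpace K] [CompactSpace K] [SecondCountableTopology E]
    [BorelSpace E] [MeasurableSpace C(K, E)] [BorelSpace C(K, E)] {f : α → C(K, E)}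
    (hf : ∀ k, Measurable fun a => f a k) : Measurable f :=
  measurable_of_measurable_dist fun g => by
    simp_rw [dist_eq_norm]
    exact measurable_norm_of_measurable_apply fun k => (hf k).sub_const (g k)

end ContinuousMap

namespace MeasureTheory.ProbabilityMeasure

variable {Ω : Type*} [MeasurableSpace Ω] [TopologicalSpace Ω]

theorem measurable_toMeasure_of_continuous [HasOuterApproxClosed Ω] [BorelSpace Ω] {W : Type*}
    [TopologicalSpace W] [MeasurableSpace W] [OpensMeasurableSpace W]
    {g : W → ProbabilityMeasure Ω} (hg : Continuous g) :
    Measurable fun w => (g w : Measure Ω) := by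
  refine Measurable.measure_of_isPiSystem_of_isProbabilityMeasure
    (BorelSpace.measurable_eq.trans borel_eq_generateFrom_isClosed) isPiSystem_isClosed
    fun F hF => UpperSemicontinuous.measurable ?_
  exact upperSemicontinuous_iff_limsup_le.2 fun w =>
    limsup_measure_closed_le_of_tendsto (hg.tendsto w) hF

theorem measurable_integral_of_continuous [HasOuterApproxClosed Ω] [BorelSpace Ω] {W : Type*}
    [TopologicalSpace W] [MeasurableSpace W] [OpensMeasurableSpace W]
    {g : W → ProbabilityMeasure Ω} (hg : Continuous g) {f : W × Ω → ℝ} (hf : Measurable f) :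
    Measurable fun w => ∫ ω, f (w, ω) ∂g w := by
  let κ : ProbabilityTheory.Kernel W Ω := ⟨_, measurable_toMeasure_of_continuous hg⟩
  have : ProbabilityTheory.IsMarkovKernel κ := ⟨fun w => by dsimp [κ]; infer_instance⟩
  exact (hf.stronglyMeasurable.integral_kernel_prod_right' (κ := κ)).measurable

theorem continuous_map_of_continuous_apply {X Y τ : Type*} [TopologicalSpace τ]
    [FirstCountableTopology τ] [MeasurableSpace X] [TopologicalSpace Y] [MeasurableSpace Y]
    [OpensMeasurableSpace Y] (μ : ProbabilityMeasure X) {g : τ → X → Y}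
    (hmeas : ∀ t, Measurable (g t)) (hcont : ∀ x, Continuous fun t => g t x) :
    Continuous fun t => μ.map (hmeas t).aemeasurable := by
  refine continuous_iff_continuousAt.2 fun t => tendsto_iff_forall_integral_tendsto.2 fun f => ?_
  simp only [toMeasure_map, integral_map (hmeas _).aemeasurable f.continuous.aestronglyMeasurable]
  exact tendsto_integral_filter_of_dominated_convergence (fun _ => ‖f‖)
    (.of_forall fun s => (f.continuous.measurable.comp (hmeas s)).aestronglyMeasurable)
    (.of_forall fun s => ae_of_all _ fun x => f.norm_coe_le_norm _) (integrable_const _)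
    (ae_of_all _ fun x => (f.continuous.tendsto _).comp ((hcont x).tendsto t))

variable [OpensMeasurableSpace Ω]

theorem lipschitzWith_integral (μ : ProbabilityMeasure Ω) :
    LipschitzWith 1 fun f : Ω →ᵇ ℝ => ∫ ω, f ω ∂μ := by
  refine LipschitzWith.of_dist_le_mul fun f g => ?_
  rw [NNReal.coe_one, one_mul, Real.dist_eq, dist_eq_norm,
    ← integral_sub (f.integrable _) (g.integrable _)]
  exact (f - g).norm_integral_le_norm μ

theorem continuous_integral_prod :
    Continuous fun p : (Ω →ᵇ ℝ) × ProbabilityMeasure Ω => ∫ ω, p.1 ω ∂p.2 :=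
  continuous_prod_of_continuous_lipschitzWith _ 1
    continuous_integral_boundedContinuousFunction lipschitzWith_integral

theorem continuous_integral_of_continuous_uncurry {X : Type*} [TopologicalSpace X] [CompactSpace Ω]
    {F : X → Ω → ℝ} (hF : Continuous (Function.uncurry F)) :
    Continuous fun p : X × ProbabilityMeasure Ω => ∫ ω, F p.1 ω ∂p.2 := by
  have hcurry : Continuous fun x => BoundedContinuousFunction.mkOfCompact
      (ContinuousMap.curry ⟨Function.uncurry F, hF⟩ x) :=
    (ContinuousMap.isometryEquivBoundedOfCompact Ω ℝ).continuous.comp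
      (ContinuousMap.curry ⟨_, hF⟩).continuous
  exact continuous_integral_prod.comp ((hcurry.comp continuous_fst).prodMk continuous_snd)

theorem tendsto_of_forall_mem_dense_integral_tendsto {S : Set (Ω →ᵇ ℝ)} (hS : Dense S)
    {ι : Type*} {l : Filter ι} {μs : ι → ProbabilityMeasure Ω} {μ : ProbabilityMeasure Ω}
    (h : ∀ f ∈ S, Tendsto (fun i => ∫ ω, f ω ∂μs i) l (𝓝 (∫ ω, f ω ∂μ))) :
    Tendsto μs l (𝓝 μ) := by
  have hclosed := (LipschitzWith.uniformEquicontinuous _ 1 fun i =>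
    lipschitzWith_integral (μs i)).equicontinuous.isClosed_setOfPred_tendsto (l := l)
    (lipschitzWith_integral μ).continuous
  exact tendsto_iff_forall_integral_tendsto.2 fun f => hclosed.closure_subset_iff.2 h (hS f)

end MeasureTheory.ProbabilityMeasure

theorem MeasureTheory.ProbabilityMeasure.secondCountableTopology_of_compactSpace {Ω : Type*}
    [MetricSpace Ω] [CompactSpace Ω] [MeasurableSpace Ω] [OpensMeasurableSpace Ω] :
    SecondCountableTopology (ProbabilityMeasure Ω) := by
  have : SeparableSpace (Ω →ᵇ ℝ) :=
    (ContinuousMap.isometryEquivBoundedOfCompact Ω ℝ).surjective.denseRange.separableSpace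
      (ContinuousMap.isometryEquivBoundedOfCompact Ω ℝ).continuous
  obtain ⟨S, hS, hSdense⟩ := exists_countable_dense (Ω →ᵇ ℝ)
  have : Countable S := hS.to_subtype
  let J : ProbabilityMeasure Ω → S → ℝ := fun μ f => ∫ ω, (f : Ω →ᵇ ℝ) ω ∂μ
  have hJ : Continuous J := _root_.continuous_pi fun f =>
    continuous_integral_boundedContinuousFunction _
  refine IsInducing.secondCountableTopology (f := J) (isInducing_iff_nhds.2 fun μ => ?_)
  refine le_antisymm (hJ.tendsto μ).le_comap ?_
  exact tendsto_of_forall_mem_dense_integral_tendsto (μs := id) (l := comap J (𝓝 (J μ))) hSdense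
    fun f hf => ((continuous_apply (⟨f, hf⟩ : S)).tendsto (J μ)).comp tendsto_comap

theorem abs_integral_sub_le_of_abs_sub_le_compl {Z : Type*} [MeasurableSpace Z] {ν : Measure Z}
    [IsProbabilityMeasure ν] {f g : Z → ℝ} (hf : Integrable f ν) (hg : Integrable g ν)
    {F : Set Z} (hF : MeasurableSet F) {ε M : ℝ} (hε : 0 ≤ ε)
    (hcompl : ∀ z ∉ F, |f z - g z| ≤ ε) (hM : ∀ z, |f z - g z| ≤ M) :
    |∫ z, f z ∂ν - ∫ z, g z ∂ν| ≤ ε + M * ν.real F := by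
  have hbound : ∀ z, |f z - g z| ≤ ε + F.indicator (fun _ => M) z := fun z => by
    by_cases hz : z ∈ F
    · rw [indicator_of_mem hz]; linarith [hM z]
    · rw [indicator_of_notMem hz, add_zero]; exact hcompl z hz
  have hint : Integrable (fun z => ε + F.indicator (fun _ => M) z) ν :=
    (integrable_const ε).add ((integrable_const M).indicator hF)
  calc |∫ z, f z ∂ν - ∫ z, g z ∂ν| ≤ ∫ z, |f z - g z| ∂ν := by
        rw [← integral_sub hf hg]; exact abs_integral_le_integral_abs
    _ ≤ ∫ z, (ε + F.indicator (fun _ => M) z) ∂ν := integral_mono (hf.sub hg).abs hint hbound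
    _ = ε + M * ν.real F := by
        rw [integral_add (integrable_const ε) ((integrable_const M).indicator hF),
          integral_indicator_const M hF]
        simp [mul_comm]

theorem abs_integral_sub_integral_le_of_approx {Z : Type*} [MeasurableSpace Z]
    {μ μ₀ : Measure Z} [IsProbabilityMeasure μ] [IsProbabilityMeasure μ₀] {G G₀ g : Z → ℝ}
    {C ε : ℝ} (hG : Measurable G) (hG₀ : Measurable G₀) (hg : Measurable g)
    (hGC : ∀ z, |G z| ≤ C) (hG₀C : ∀ z, |G₀ z| ≤ C) (hgC : ∀ z, |g z| ≤ C) {F : Set Z}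
    (hF : MeasurableSet F) (hε : 0 ≤ ε) (hμF : μ.real F ≤ ε) (hμ₀F : μ₀.real F ≤ ε)
    (hGF : ∀ z ∉ F, |G z - G₀ z| ≤ ε) (hgF : ∀ z ∉ F, |G₀ z - g z| ≤ ε)
    (hgμ : |∫ z, g z ∂μ - ∫ z, g z ∂μ₀| ≤ ε) :
    |∫ z, G z ∂μ - ∫ z, G₀ z ∂μ₀| ≤ (4 + 6 * C) * ε := by
  have hint : ∀ {ν : Measure Z} [IsFiniteMeasure ν] {f : Z → ℝ}, Measurable f →
      (∀ z, |f z| ≤ C) → Integrable f ν := fun hf hfC =>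
    .of_bound hf.aestronglyMeasurable C (ae_of_all _ hfC)
  have hsub : ∀ {f f' : Z → ℝ}, (∀ z, |f z| ≤ C) → (∀ z, |f' z| ≤ C) →
      ∀ z, |f z - f' z| ≤ 2 * C := fun {f f'} hf hf' z => by
    linarith [abs_sub (f z) (f' z), hf z, hf' z]
  have : Nonempty Z := nonempty_of_isProbabilityMeasure μ
  have hC : 0 ≤ C := (abs_nonneg _).trans (hGC (Classical.arbitrary Z))
  have h₁ := abs_integral_sub_le_of_abs_sub_le_compl (ν := μ) (hint hG hGC) (hint hG₀ hG₀C) hF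
    hε hGF (hsub hGC hG₀C)
  have h₂ := abs_integral_sub_le_of_abs_sub_le_compl (ν := μ) (hint hG₀ hG₀C) (hint hg hgC) hF
    hε hgF (hsub hG₀C hgC)
  have h₃ := abs_integral_sub_le_of_abs_sub_le_compl (ν := μ₀) (hint hG₀ hG₀C) (hint hg hgC) hF
    hε hgF (hsub hG₀C hgC)
  have : 2 * C * μ.real F ≤ 2 * C * ε := by gcongr
  have : 2 * C * μ₀.real F ≤ 2 * C * ε := by gcongr
  have := abs_le.1 h₁; have := abs_le.1 h₂; have := abs_le.1 h₃; have := abs_le.1 hgμ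
  rw [abs_le]
  constructor <;> linarith

theorem continuousAt_integral_of_approx {Z : Type*} [TopologicalSpace Z] [MeasurableSpace Z]
    [OpensMeasurableSpace Z] [HasOuterApproxClosed Z] {G : ProbabilityMeasure Z → Z → ℝ}
    {μ₀ : ProbabilityMeasure Z} {C : ℝ} (hmeas : ∀ μ, Measurable (G μ))
    (hbdd : ∀ μ z, |G μ z| ≤ C)
    (happrox : ∀ ε > 0, ∃ F : Set Z, IsClosed F ∧ (μ₀ : Measure Z) F < ENNReal.ofReal ε ∧
      (∀ᶠ μ in 𝓝 μ₀, ∀ z ∉ F, |G μ z - G μ₀ z| ≤ ε) ∧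
      ∃ g : Z → ℝ, Continuous g ∧ (∀ z, |g z| ≤ C) ∧ ∀ z ∉ F, |G μ₀ z - g z| ≤ ε) :
    ContinuousAt (fun μ : ProbabilityMeasure Z => ∫ z, G μ z ∂(μ : Measure Z)) μ₀ := by
  have : Nonempty Z := nonempty_of_isProbabilityMeasure (μ₀ : Measure Z)
  have hC : 0 ≤ C := (abs_nonneg _).trans (hbdd μ₀ (Classical.arbitrary Z))
  refine Metric.tendsto_nhds.2 fun δ hδ => ?_
  have hε : 0 < δ / (2 * (4 + 6 * C)) := by positivity
  obtain ⟨F, hF, hμ₀F, hGF, g, hg, hgC, hgF⟩ := happrox _ hε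
  have hμF := eventually_lt_of_limsup_lt
    ((ProbabilityMeasure.limsup_measure_closed_le_of_tendsto tendsto_id hF).trans_lt hμ₀F)
  have hgμ := Metric.tendsto_nhds.1
    ((ProbabilityMeasure.continuous_integral_boundedContinuousFunction
      (BoundedContinuousFunction.ofNormedAddCommGroup g hg C fun z =>
        (Real.norm_eq_abs _).trans_le (hgC z))).tendsto μ₀) _ hε
  filter_upwards [hGF, hμF, hgμ] with μ hGμ hμF hgμ
  refine (abs_integral_sub_integral_le_of_approx (hmeas μ) (hmeas μ₀) hg.measurable (hbdd μ)
    (hbdd μ₀) hgC hF.measurableSet hε.le (ENNReal.toReal_lt_of_lt_ofReal hμF).le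
    (ENNReal.toReal_lt_of_lt_ofReal hμ₀F).le hGμ hgF (Real.dist_eq _ _ ▸ hgμ.le)).trans_lt ?_
  rw [mul_div_assoc', div_lt_iff₀ (by positivity)]
  nlinarith

theorem exists_pos_measure_le_norm_lt {E : Type*} [NormedAddCommGroup E] [MeasurableSpace E]
    [OpensMeasurableSpace E] (μ : Measure E) [IsFiniteMeasure μ] {ε : ℝ≥0∞} (hε : 0 < ε) :
    ∃ R > 0, μ {x | R ≤ ‖x‖} < ε := by
  have hempty : ⋂ R : ℝ, {x : E | R ≤ ‖x‖} = ∅ :=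
    eq_empty_of_forall_notMem fun x hx => by
      have : ‖x‖ + 1 ≤ ‖x‖ := mem_iInter.1 hx (‖x‖ + 1)
      linarith
  have h := tendsto_measure_iInter_atTop (μ := μ)
    (fun R => (measurableSet_le measurable_const measurable_norm).nullMeasurableSet)
    (fun R R' hRR' x (hx : R' ≤ ‖x‖) => hRR'.trans hx) ⟨0, measure_ne_top _ _⟩
  rw [hempty, measure_empty] at h
  exact ((h.eventually (gt_mem_nhds hε)).and (eventually_gt_atTop 0)).exists.imp
    fun R hR => ⟨hR.2, hR.1⟩

theorem abs_integral_sub_le_integral_of_map_fst {α β : Type*} [MeasurableSpace α]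
    [MeasurableSpace β] {ν : Measure (α × β)} {ρ : Measure α} (hν : ν.map Prod.fst = ρ)
    {f g : α × β → ℝ} (hf : Integrable f ν) (hg : Integrable g ν) {h : α → ℝ}
    (hh : Integrable h ρ) (hfg : ∀ p, |f p - g p| ≤ h p.1) :
    |∫ p, f p ∂ν - ∫ p, g p ∂ν| ≤ ∫ a, h a ∂ρ := by
  subst hν
  rw [← integral_sub hf hg, integral_map measurable_fst.aemeasurable hh.aestronglyMeasurable]
  exact abs_integral_le_integral_abs.trans
    (integral_mono (hf.sub hg).abs (hh.comp_measurable measurable_fst) hfg)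

theorem exists_retraction_closedBall {E : Type*} [NormedAddCommGroup E] [NormedSpace ℝ E]
    {R : ℝ} (hR : 0 < R) :
    ∃ r : E → Metric.closedBall (0 : E) R, Continuous r ∧
      ∀ y (hy : y ∈ Metric.closedBall (0 : E) R), r y = ⟨y, hy⟩ := by
  have hmax : ∀ y : E, 0 < max R ‖y‖ := fun y => hR.trans_le (le_max_left _ _)
  have hmem : ∀ y : E, (R / max R ‖y‖) • y ∈ Metric.closedBall (0 : E) R := fun y => by
    rw [mem_closedBall_zero_iff, norm_smul, Real.norm_of_nonneg (div_pos hR (hmax y)).le,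
      div_mul_eq_mul_div, div_le_iff₀ (hmax y)]
    exact mul_le_mul_of_nonneg_left (le_max_right _ _) hR.le
  refine ⟨fun y => ⟨_, hmem y⟩, ?_, fun y hy => ?_⟩
  · exact ((continuous_const.div (continuous_const.max continuous_norm)
      fun y => (hmax y).ne').smul continuous_id).subtype_mk _
  · rw [mem_closedBall_zero_iff] at hy
    simp [max_eq_left hy, hR.ne']

theorem abs_sub_projIcc_le {α : Type*} [AddCommGroup α] [LinearOrder α] [IsOrderedAddMonoid α]
    {a b u v : α} (h : a ≤ b) (hu : u ∈ Icc a b) : |u - projIcc a b h v| ≤ |u - v| := by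
  simpa [projIcc_of_mem h hu] using abs_projIcc_sub_projIcc (c := u) (d := v) h

def normalizedVolume (T : ℝ) : Measure (Icc (0 : ℝ) T) :=
  (ENNReal.ofReal T)⁻¹ • Measure.comap Subtype.val volume

theorem isProbabilityMeasure_normalizedVolume {T : ℝ} (hT : 0 < T) :
    IsProbabilityMeasure (normalizedVolume T) := by
  constructor
  rw [normalizedVolume, Measure.smul_apply,
    (MeasurableEmbedding.subtype_coe measurableSet_Icc).comap_apply, image_univ,
    Subtype.range_coe, Real.volume_Icc, sub_zero, smul_eq_mul]
  exact ENNReal.inv_mul_cancel (ENNReal.ofReal_pos.2 hT).ne' ENNReal.ofReal_ne_top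

def costSection {E : Type*} [TopologicalSpace E] [MeasurableSpace E] [OpensMeasurableSpace E]
    {T : ℝ} {A : Type} [TopologicalSpace A] (ψ : Icc (0 : ℝ) T → E → ProbabilityMeasure E → A → ℝ)
    (hcont : ∀ t, Continuous fun q : E × ProbabilityMeasure E × A => ψ t q.1 q.2.1 q.2.2)
    (s : Set E) (t : Icc (0 : ℝ) T) (ν : ProbabilityMeasure E) : C(s × A, ℝ) :=
  ⟨fun k => ψ t k.1 ν k.2, (hcont t).comp
    ((continuous_subtype_val.comp continuous_fst).prodMk (continuous_const.prodMk continuous_snd))⟩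

theorem continuous_costSection {E : Type*} [TopologicalSpace E] [MeasurableSpace E]
    [OpensMeasurableSpace E] {T : ℝ} {A : Type} [TopologicalSpace A]
    {ψ : Icc (0 : ℝ) T → E → ProbabilityMeasure E → A → ℝ}
    (hcont : ∀ t, Continuous fun q : E × ProbabilityMeasure E × A => ψ t q.1 q.2.1 q.2.2)
    (s : Set E) (t : Icc (0 : ℝ) T) : Continuous (costSection ψ hcont s t) :=
  (ContinuousMap.curry ⟨fun p : ProbabilityMeasure E × (s × A) => ψ t p.2.1 p.1 p.2.2,
    (hcont t).comp ((continuous_subtype_val.comp (continuous_fst.comp continuous_snd)).prodMk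
      (continuous_fst.prodMk (continuous_snd.comp continuous_snd)))⟩).continuous

section RelaxedCost

variable {E : Type*} [NormedAddCommGroup E] [SecondCountableTopology E] [MeasurableSpace E]
  [BorelSpace E] {T : ℝ} {A : Type} [MetricSpace A] [CompactSpace A] [MeasurableSpace A]
  [BorelSpace A]
  [MeasurableSpace C(Icc (0 : ℝ) T, E)] [BorelSpace C(Icc (0 : ℝ) T, E)]
  [MeasurableSpace (RelaxedControls T A)] [BorelSpace (RelaxedControls T A)]

def pathMarginal (m : ProbabilityMeasure (C(Icc (0 : ℝ) T, E) × RelaxedControls T A))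
    (t : Icc (0 : ℝ) T) : ProbabilityMeasure E :=
  m.map (f := fun p => p.1 t)
    ((continuous_eval_const t).comp continuous_fst).measurable.aemeasurable

theorem continuous_pathMarginal
    (m : ProbabilityMeasure (C(Icc (0 : ℝ) T, E) × RelaxedControls T A)) :
    Continuous (pathMarginal m) :=
  m.continuous_map_of_continuous_apply
    (fun t => ((continuous_eval_const t).comp continuous_fst).measurable) fun p => p.1.continuous

theorem continuous_pathMarginal_apply (t : Icc (0 : ℝ) T) :
    Continuous fun m : ProbabilityMeasure (C(Icc (0 : ℝ) T, E) × RelaxedControls T A) =>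
      pathMarginal m t :=
  ProbabilityMeasure.continuous_map ((continuous_eval_const t).comp continuous_fst)

def relaxedCost (ψ : Icc (0 : ℝ) T → E → ProbabilityMeasure E → A → ℝ)
    (m : ProbabilityMeasure (C(Icc (0 : ℝ) T, E) × RelaxedControls T A))
    (xq : C(Icc (0 : ℝ) T, E) × RelaxedControls T A) : ℝ :=
  ∫ ta : Icc (0 : ℝ) T × A, ψ ta.1 (xq.1 ta.1) (pathMarginal m ta.1) ta.2 ∂xq.2.1

variable {ψ : Icc (0 : ℝ) T → E → ProbabilityMeasure E → A → ℝ} {C : ℝ}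

theorem abs_relaxedCost_le (hbdd : ∀ t x ν a, |ψ t x ν a| ≤ C) (m xq) :
    |relaxedCost ψ m xq| ≤ C := by
  simpa [relaxedCost] using norm_integral_le_of_norm_le_const
    (μ := (xq.2.1 : Measure (Icc (0 : ℝ) T × A)))
    (.of_forall fun ta => (Real.norm_eq_abs _).trans_le (hbdd _ _ _ _))

variable [MeasurableSpace (ProbabilityMeasure E)] [BorelSpace (ProbabilityMeasure E)]

theorem measurable_relaxedCost
    (hmeas : Measurable fun q : Icc (0 : ℝ) T × E × ProbabilityMeasure E × A =>
      ψ q.1 q.2.1 q.2.2.1 q.2.2.2)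
    (m : ProbabilityMeasure (C(Icc (0 : ℝ) T, E) × RelaxedControls T A)) :
    Measurable (relaxedCost ψ m) := by
  refine ProbabilityMeasure.measurable_integral_of_continuous (continuous_subtype_val.comp
    continuous_snd : Continuous fun xq : C(Icc (0 : ℝ) T, E) × RelaxedControls T A => xq.2.1)
    (hmeas.comp (f := fun p : (C(Icc (0 : ℝ) T, E) × RelaxedControls T A) ×
      (Icc (0 : ℝ) T × A) => (p.2.1, p.1.1 p.2.1, pathMarginal m p.2.1, p.2.2)) ?_)
  have := (continuous_pathMarginal m).measurable
  have := (ContinuousEval.continuous_eval (F := C(Icc (0 : ℝ) T, E))).measurable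
  fun_prop

theorem integrable_cost_pathMarginal (hbdd : ∀ t x ν a, |ψ t x ν a| ≤ C)
    (hmeas : Measurable fun q : Icc (0 : ℝ) T × E × ProbabilityMeasure E × A =>
      ψ q.1 q.2.1 q.2.2.1 q.2.2.2)
    (m : ProbabilityMeasure (C(Icc (0 : ℝ) T, E) × RelaxedControls T A))
    (x : C(Icc (0 : ℝ) T, E)) (μ : Measure (Icc (0 : ℝ) T × A)) [IsFiniteMeasure μ] :
    Integrable (fun ta => ψ ta.1 (x ta.1) (pathMarginal m ta.1) ta.2) μ := by
  refine .of_bound (hmeas.comp (f := fun ta : Icc (0 : ℝ) T × A =>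
    (ta.1, x ta.1, pathMarginal m ta.1, ta.2)) ?_).aestronglyMeasurable C
    (ae_of_all _ fun ta => (Real.norm_eq_abs _).trans_le (hbdd _ _ _ _))
  have := (continuous_pathMarginal m).measurable
  have := x.continuous.measurable
  fun_prop

variable [ProperSpace E]

theorem eventually_abs_relaxedCost_sub_le (hT : 0 < T) (hC : 0 ≤ C)
    (hbdd : ∀ t x ν a, |ψ t x ν a| ≤ C)
    (hmeas : Measurable fun q : Icc (0 : ℝ) T × E × ProbabilityMeasure E × A =>
      ψ q.1 q.2.1 q.2.2.1 q.2.2.2)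
    (hcont : ∀ t, Continuous fun q : E × ProbabilityMeasure E × A => ψ t q.1 q.2.1 q.2.2)
    (m₀ : ProbabilityMeasure (C(Icc (0 : ℝ) T, E) × RelaxedControls T A)) (R : ℝ) {ε : ℝ}
    (hε : 0 < ε) :
    ∀ᶠ m in 𝓝 m₀, ∀ xq : C(Icc (0 : ℝ) T, E) × RelaxedControls T A, ‖xq.1‖ < R →
      |relaxedCost ψ m xq - relaxedCost ψ m₀ xq| ≤ ε := by
  -- dominated convergence along `𝓝 m₀` needs it countably generated: the topology is metrizable
  have : SecondCountableTopology (ProbabilityMeasure (Icc (0 : ℝ) T × A)) :=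
    ProbabilityMeasure.secondCountableTopology_of_compactSpace
  have : SecondCountableTopology (RelaxedControls T A) :=
    secondCountableTopology_induced _ _ Subtype.val
  have : PseudoMetrizableSpace (RelaxedControls T A) := IsInducing.subtypeVal.pseudoMetrizableSpace
  have := isProbabilityMeasure_normalizedVolume hT
  let Θ : ProbabilityMeasure (C(Icc (0 : ℝ) T, E) × RelaxedControls T A) → Icc (0 : ℝ) T →
      C(Metric.closedBall (0 : E) R × A, ℝ) :=
    fun m t => costSection ψ hcont _ t (pathMarginal m t)
  have hΘ : ∀ m t, ‖Θ m t‖ ≤ C := fun m t =>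
    (ContinuousMap.norm_le _ hC).2 fun k => (Real.norm_eq_abs _).trans_le (hbdd _ _ _ _)
  have hΘmeas : ∀ m k, Measurable fun t => Θ m t k := fun m k =>
    hmeas.comp (measurable_id.prodMk (measurable_const.prodMk
      ((continuous_pathMarginal m).measurable.prodMk measurable_const)))
  have hdist : ∀ m, Measurable fun t => ‖Θ m t - Θ m₀ t‖ := fun m =>
    ContinuousMap.measurable_norm_of_measurable_apply fun k => (hΘmeas m k).sub (hΘmeas m₀ k)
  have hdist_le : ∀ m t, ‖Θ m t - Θ m₀ t‖ ≤ 2 * C := fun m t => by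
    linarith [norm_sub_le (Θ m t) (Θ m₀ t), hΘ m t, hΘ m₀ t]
  have hlim : Tendsto (fun m => ∫ t, ‖Θ m t - Θ m₀ t‖ ∂normalizedVolume T) (𝓝 m₀) (𝓝 0) := by
    simpa using tendsto_integral_filter_of_dominated_convergence (fun _ => 2 * C)
      (.of_forall fun m => (hdist m).aestronglyMeasurable)
      (.of_forall fun m => ae_of_all _ fun t => (norm_norm _).trans_le (hdist_le m t))
      (integrable_const _) (ae_of_all _ fun t => tendsto_iff_norm_sub_tendsto_zero.1
        (((continuous_costSection hcont _ t).comp (continuous_pathMarginal_apply t)).tendsto m₀))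
  filter_upwards [hlim.eventually_le_const hε] with m hm xq hx
  refine (abs_integral_sub_le_integral_of_map_fst (ρ := normalizedVolume T) xq.2.2
    (integrable_cost_pathMarginal hbdd hmeas m xq.1 _)
    (integrable_cost_pathMarginal hbdd hmeas m₀ xq.1 _)
    (.of_bound (hdist m).aestronglyMeasurable _ (ae_of_all _ fun t =>
      (norm_norm _).trans_le (hdist_le m t))) fun ta => ?_).trans hm
  have hx' : xq.1 ta.1 ∈ Metric.closedBall (0 : E) R :=
    mem_closedBall_zero_iff.2 ((xq.1.norm_coe_le_norm _).trans hx.le)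
  exact (Θ m ta.1 - Θ m₀ ta.1).norm_coe_le_norm (⟨xq.1 ta.1, hx'⟩, ta.2)

variable [NormedSpace ℝ E]

theorem exists_continuous_approx_relaxedCost (hT : 0 < T) (hC : 0 ≤ C)
    (hbdd : ∀ t x ν a, |ψ t x ν a| ≤ C)
    (hmeas : Measurable fun q : Icc (0 : ℝ) T × E × ProbabilityMeasure E × A =>
      ψ q.1 q.2.1 q.2.2.1 q.2.2.2)
    (hcont : ∀ t, Continuous fun q : E × ProbabilityMeasure E × A => ψ t q.1 q.2.1 q.2.2)
    (m₀ : ProbabilityMeasure (C(Icc (0 : ℝ) T, E) × RelaxedControls T A)) {R : ℝ} (hR : 0 < R)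
    {ε : ℝ} (hε : 0 < ε) :
    ∃ g : C(Icc (0 : ℝ) T, E) × RelaxedControls T A → ℝ, Continuous g ∧ (∀ xq, |g xq| ≤ C) ∧
      ∀ xq : C(Icc (0 : ℝ) T, E) × RelaxedControls T A, ‖xq.1‖ < R →
        |relaxedCost ψ m₀ xq - g xq| ≤ ε := by
  have := isProbabilityMeasure_normalizedVolume hT
  borelize C(Metric.closedBall (0 : E) R × A, ℝ)
  let Θ : Icc (0 : ℝ) T → C(Metric.closedBall (0 : E) R × A, ℝ) :=
    fun t => costSection ψ hcont _ t (pathMarginal m₀ t)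
  have hΘ : Integrable Θ (normalizedVolume T) :=
    .of_bound (ContinuousMap.measurable_of_measurable_apply fun k =>
      hmeas.comp (measurable_id.prodMk (measurable_const.prodMk
        ((continuous_pathMarginal m₀).measurable.prodMk measurable_const)))).aestronglyMeasurable C
      (ae_of_all _ fun t => (ContinuousMap.norm_le _ hC).2 fun k =>
        (Real.norm_eq_abs _).trans_le (hbdd _ _ _ _))
  -- `θ` is evaluated at `x_t` through the retraction `r`; clamping it to `[-C, C]` keeps the
  -- bound without increasing the distance to `Θ`
  obtain ⟨θ, hθ, hθint⟩ := hΘ.exists_boundedContinuous_integral_sub_le hε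
  obtain ⟨r, hr, hr_eq⟩ := exists_retraction_closedBall (E := E) hR
  let F : C(Icc (0 : ℝ) T, E) → Icc (0 : ℝ) T × A → ℝ :=
    fun x ta => projIcc (-C) C (by linarith) (θ ta.1 (r (x ta.1), ta.2))
  have hF : Continuous (Function.uncurry F) := by
    have := θ.continuous
    fun_prop
  have hFC : ∀ x ta, |F x ta| ≤ C := fun x ta =>
    abs_le.2 (projIcc (-C) C _ (θ ta.1 (r (x ta.1), ta.2))).2
  refine ⟨fun xq => ∫ ta, F xq.1 ta ∂xq.2.1,
    (ProbabilityMeasure.continuous_integral_of_continuous_uncurry hF).comp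
      (continuous_fst.prodMk (continuous_subtype_val.comp continuous_snd)), fun xq => ?_,
    fun xq hx => ?_⟩
  · simpa using norm_integral_le_of_norm_le_const (μ := (xq.2.1 : Measure (Icc (0 : ℝ) T × A)))
      (.of_forall fun ta => (Real.norm_eq_abs _).trans_le (hFC xq.1 ta))
  refine (abs_integral_sub_le_integral_of_map_fst (ρ := normalizedVolume T) xq.2.2
    (integrable_cost_pathMarginal hbdd hmeas m₀ xq.1 _)
    (.of_bound (hF.comp (continuous_const.prodMk continuous_id)).aestronglyMeasurable C
      (ae_of_all _ fun ta => (Real.norm_eq_abs _).trans_le (hFC xq.1 ta)))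
    (hΘ.sub hθint).norm fun ta => ?_).trans hθ
  have hx' : xq.1 ta.1 ∈ Metric.closedBall (0 : E) R :=
    mem_closedBall_zero_iff.2 ((xq.1.norm_coe_le_norm _).trans hx.le)
  have hFx : F xq.1 ta = projIcc (-C) C (by linarith) (θ ta.1 (⟨xq.1 ta.1, hx'⟩, ta.2)) := by
    simp only [F, hr_eq _ hx']
  change |_ - F xq.1 ta| ≤ ‖Θ ta.1 - θ ta.1‖
  rw [hFx]
  exact (abs_sub_projIcc_le _ (abs_le.1 (hbdd _ _ _ _))).trans
    ((Θ ta.1 - θ ta.1).norm_coe_le_norm (⟨xq.1 ta.1, hx'⟩, ta.2))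

end RelaxedCost

theorem relaxed_control_functional_continuous_general
    (d : ℕ) (T : ℝ) (hT : 0 < T)
    (A : Type) [MetricSpace A] [CompactSpace A] [MeasurableSpace A] [BorelSpace A]
    [MeasurableSpace C(Icc (0 : ℝ) T, EuclideanSpace ℝ (Fin d))]
    [BorelSpace C(Icc (0 : ℝ) T, EuclideanSpace ℝ (Fin d))]
    [MeasurableSpace (ProbabilityMeasure (EuclideanSpace ℝ (Fin d)))]
    [BorelSpace (ProbabilityMeasure (EuclideanSpace ℝ (Fin d)))]
    [MeasurableSpace (RelaxedControls T A)]
    [BorelSpace (RelaxedControls T A)]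
    (ψ : Icc (0 : ℝ) T → EuclideanSpace ℝ (Fin d) →
      ProbabilityMeasure (EuclideanSpace ℝ (Fin d)) → A → ℝ)
    -- ψ bounded
    (hbdd : ∃ C : ℝ, ∀ t x m a, |ψ t x m a| ≤ C)
    -- ψ jointly Borel measurable
    (hmeas : Measurable fun q : Icc (0 : ℝ) T × EuclideanSpace ℝ (Fin d) ×
        ProbabilityMeasure (EuclideanSpace ℝ (Fin d)) × A =>
      ψ q.1 q.2.1 q.2.2.1 q.2.2.2)
    -- for each t, ψ(t, ·, ·, ·) is continuous
    (hcont : ∀ t : Icc (0 : ℝ) T, Continuous fun q : EuclideanSpace ℝ (Fin d) ×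
        ProbabilityMeasure (EuclideanSpace ℝ (Fin d)) × A =>
      ψ t q.1 q.2.1 q.2.2) :
    Continuous fun m : ProbabilityMeasure
        (C(Icc (0 : ℝ) T, EuclideanSpace ℝ (Fin d)) × RelaxedControls T A) =>
      ∫ xq : C(Icc (0 : ℝ) T, EuclideanSpace ℝ (Fin d)) × RelaxedControls T A,
        (∫ ta : Icc (0 : ℝ) T × A,
          ψ ta.1 (xq.1 ta.1)
            (m.map (f := fun p => p.1 ta.1)
              (((continuous_eval_const ta.1).comp continuous_fst).measurable.aemeasurable))
            ta.2 ∂(xq.2.1.toMeasure))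
        ∂(m.toMeasure) := by
  have : PseudoMetrizableSpace (RelaxedControls T A) := IsInducing.subtypeVal.pseudoMetrizableSpace
  obtain ⟨C, hC⟩ := hbdd
  have hψC : ∀ t x ν a, |ψ t x ν a| ≤ max C 0 := fun t x ν a =>
    (hC t x ν a).trans (le_max_left _ _)
  refine continuous_iff_continuousAt.2 fun m₀ => continuousAt_integral_of_approx
    (G := relaxedCost ψ) (measurable_relaxedCost hmeas) (abs_relaxedCost_le hψC) fun ε hε => ?_
  obtain ⟨R, hR, hRε⟩ := exists_pos_measure_le_norm_lt
    ((m₀ : Measure (C(Icc (0 : ℝ) T, EuclideanSpace ℝ (Fin d)) × RelaxedControls T A)).map Prod.fst)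
    (ENNReal.ofReal_pos.2 hε)
  obtain ⟨g, hg, hgC, hgε⟩ := exists_continuous_approx_relaxedCost hT (le_max_right _ _) hψC
    hmeas hcont m₀ hR hε
  refine ⟨{xq | R ≤ ‖xq.1‖}, isClosed_le continuous_const (continuous_norm.comp continuous_fst),
    ?_, (eventually_abs_relaxedCost_sub_le hT (le_max_right _ _) hψC hmeas hcont m₀ R hε).mono
      fun m hm xq hxq => hm xq (not_le.1 hxq), g, hg, hgC, fun xq hxq => hgε xq (not_le.1 hxq)⟩
  rwa [Measure.map_apply measurable_fst (measurableSet_le measurable_const measurable_norm)]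
    at hRε

/-- Continuity of relaxed-control functionals on `𝒫(𝒞^d × 𝒱)` (bounded case). -/
theorem relaxed_control_functional_continuous
    (d : ℕ) (T : ℝ) (hT : 0 < T)
    (A : Type) [MetricSpace A] [CompactSpace A] [MeasurableSpace A] [BorelSpace A]
    [MeasurableSpace C(Icc (0 : ℝ) T, EuclideanSpace ℝ (Fin d))]
    [BorelSpace C(Icc (0 : ℝ) T, EuclideanSpace ℝ (Fin d))]
    [SecondCountableTopology C(Icc (0 : ℝ) T, EuclideanSpace ℝ (Fin d))]
    [MeasurableSpace (ProbabilityMeasure (EuclideanSpace ℝ (Fin d)))]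
    [BorelSpace (ProbabilityMeasure (EuclideanSpace ℝ (Fin d)))]
    [MeasurableSpace (RelaxedControls T A)]
    [BorelSpace (RelaxedControls T A)]
    (ψ : Icc (0 : ℝ) T → EuclideanSpace ℝ (Fin d) →
      ProbabilityMeasure (EuclideanSpace ℝ (Fin d)) → A → ℝ)
    -- ψ bounded
    (hbdd : ∃ C : ℝ, ∀ t x m a, |ψ t x m a| ≤ C)
    -- ψ jointly Borel measurable
    (hmeas : Measurable fun q : Icc (0 : ℝ) T × EuclideanSpace ℝ (Fin d) ×
        ProbabilityMeasure (EuclideanSpace ℝ (Fin d)) × A =>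
      ψ q.1 q.2.1 q.2.2.1 q.2.2.2)
    -- for each t, ψ(t, ·, ·, ·) is continuous
    (hcont : ∀ t : Icc (0 : ℝ) T, Continuous fun q : EuclideanSpace ℝ (Fin d) ×
        ProbabilityMeasure (EuclideanSpace ℝ (Fin d)) × A =>
      ψ t q.1 q.2.1 q.2.2) :
    Continuous fun m : ProbabilityMeasure
        (C(Icc (0 : ℝ) T, EuclideanSpace ℝ (Fin d)) × RelaxedControls T A) =>
      ∫ xq : C(Icc (0 : ℝ) T, EuclideanSpace ℝ (Fin d)) × RelaxedControls T A,
        (∫ ta : Icc (0 : ℝ) T × A,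
          ψ ta.1 (xq.1 ta.1)
            (m.map (f := fun p => p.1 ta.1)
              (((continuous_eval_const ta.1).comp continuous_fst).measurable.aemeasurable))
            ta.2 ∂(xq.2.1.toMeasure))
        ∂(m.toMeasure) :=
  relaxed_control_functional_continuous_general d T hT A ψ hbdd hmeas hcont

end
end

section
/- Let (Y_t)_{t∈[0,T]} be a continuous stochastic process with values in a Polish space E, defined on a probability space (Ω,𝓕,ℙ), and let h : E → ℝ be continuous. Let (a_t)_{t∈[0,T]} be a jointly measurable real-valued process with E∫₀^T |a_t| dt < ∞, and suppose that h(Y_t) = h(Y_0) + ∫₀ᵗ a_s ds almost surely, for almost every t ∈ [0,T]. Let â : [0,T] × C([0,T];E) → ℝ be progressively measurable (Borel measurable with â(t,x) = â(t,y) whenever x_s = y_s for all s ≤ t) and satisfy â(t,Y) = E[a_t | 𝓕^Y_t] almost surely, for almost every t ∈ [0,T], where 𝓕^Y_t := σ(Y_s : s ≤ t). Then almost surely, h(Y_t) = h(Y_0) + ∫₀ᵗ â(s,Y) ds for ALL t ∈ [0,T]. -/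
/-!
In the zero-noise case `a_t` is itself `𝓕^Y_t`-measurable. By Fubini and continuity in `t`,
almost surely `h(Y_t) = h(Y_0) + ∫₀ᵗ a_s ds` holds for every `t`, so by the Lebesgue
differentiation theorem `a_t` is, for a.e. `t`, the almost sure limit of the backward difference
quotients `n (h(Y_t) - h(Y_{t - 1/n}))`, which only see the path up to time `t`. Hence
`E[a_t | 𝓕^Y_t] = a_t`, so `â(t, Y) = a_t` for a.e. `t` almost surely, and the two integrals agree.
-/

open MeasureTheory Set Filter Topology Metric TopologicalSpace

theorem measurable_of_measurableSet_preimage_closedBall {α β : Type*} [MeasurableSpace α]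
    [PseudoMetricSpace β] [SecondCountableTopology β] [MeasurableSpace β] [BorelSpace β]
    {f : α → β} (hf : ∀ y r, 0 ≤ r → MeasurableSet (f ⁻¹' closedBall y r)) : Measurable f := by
  have hdist : ∀ y, Measurable fun x => dist (f x) y := fun y => by
    refine measurable_of_Iic fun r => ?_
    rcases le_or_gt 0 r with hr | hr
    · exact hf y r hr
    · convert MeasurableSet.empty
      exact eq_empty_of_forall_notMem fun x (hx : dist (f x) y ≤ r) =>
        hr.not_ge (dist_nonneg.trans hx)
  refine measurable_of_isOpen fun U hU => ?_
  choose! ε hε hεU using Metric.isOpen_iff.1 hU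
  obtain ⟨S, -, hSc, hSeq⟩ :=
    isOpen_biUnion_countable U (fun x => ball x (ε x)) fun _ _ => isOpen_ball
  have hU_eq : U = ⋃ x ∈ S, ball x (ε x) := by
    rw [hSeq]
    exact (iUnion₂_subset fun x hx => hεU x hx).antisymm'
      fun x hx => mem_biUnion hx (mem_ball_self (hε x hx))
  rw [hU_eq, preimage_iUnion₂]
  exact .biUnion hSc fun x _ => measurableSet_lt (hdist x) measurable_const

theorem ContinuousMap.measurable_of_measurable_eval {K X Ω : Type*}
    [TopologicalSpace K] [CompactSpace K] [LocallyCompactSpace K] [SecondCountableTopology K]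
    [TopologicalSpace X] [PseudoMetrizableSpace X] [SecondCountableTopology X] [MeasurableSpace X]
    [OpensMeasurableSpace X] [MeasurableSpace C(K, X)] [BorelSpace C(K, X)] [MeasurableSpace Ω]
    {Z : Ω → C(K, X)} (hZ : ∀ k, Measurable fun ω => Z ω k) : Measurable Z := by
  let := pseudoMetrizableSpacePseudoMetric X
  obtain ⟨Q, hQc, hQd⟩ := exists_countable_dense K
  refine measurable_of_measurableSet_preimage_closedBall fun g r hr => ?_
  have hball : Z ⁻¹' closedBall g r = ⋂ q ∈ Q, {ω | dist (Z ω q) (g q) ≤ r} := by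
    ext ω
    simp only [mem_preimage, mem_closedBall, ContinuousMap.dist_le hr, mem_iInter, mem_ofPred_eq]
    refine ⟨fun h q _ => h q, fun h => ?_⟩
    have hclosed : IsClosed {k | dist (Z ω k) (g k) ≤ r} :=
      isClosed_le (by fun_prop) continuous_const
    exact fun k => hclosed.closure_subset_iff.2 h (hQd.closure_eq ▸ mem_univ k)
  rw [hball]
  exact .biInter hQc fun q _ => measurableSet_le ((hZ q).dist measurable_const) measurable_const

theorem measurable_setIntegral_Ioc {β : Type*} [MeasurableSpace β] {f : β → ℝ → ℝ}
    (hf : Measurable (Function.uncurry f)) {l u : β → ℝ} (hl : Measurable l) (hu : Measurable u) :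
    Measurable fun x => ∫ s in Ioc (l x) (u x), f x s := by
  have hS : MeasurableSet {p : β × ℝ | l p.1 < p.2 ∧ p.2 ≤ u p.1} :=
    (measurableSet_lt (hl.comp measurable_fst) measurable_snd).inter
      (measurableSet_le measurable_snd (hu.comp measurable_fst))
  have hind := (hf.indicator hS).stronglyMeasurable.integral_prod_right' (ν := volume)
  convert hind.measurable using 2 with x
  rw [← integral_indicator measurableSet_Ioc]
  rfl

theorem measurable_intervalIntegral_of_measurable_uncurry {Ω : Type*} [MeasurableSpace Ω]
    {a : ℝ → Ω → ℝ} (ha : Measurable (Function.uncurry a)) (c : ℝ) :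
    Measurable fun p : ℝ × Ω => ∫ s in c..p.1, a s p.2 := by
  have hf : Measurable (Function.uncurry fun (p : ℝ × Ω) s => a s p.2) :=
    ha.comp (measurable_snd.prodMk (measurable_snd.comp measurable_fst))
  exact (measurable_setIntegral_Ioc hf measurable_const measurable_fst).sub
    (measurable_setIntegral_Ioc hf measurable_fst measurable_const)

theorem ae_eqOn_of_ae_ae_eq {X Ω β : Type*} [TopologicalSpace X] [MeasurableSpace X]
    {μ : Measure X} [μ.IsOpenPosMeasure] [SFinite μ] [MeasurableSpace Ω] {ℙ : Measure Ω}
    [SFinite ℙ] [TopologicalSpace β] [T2Space β] [MeasurableSpace β] [MeasurableEq β]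
    {s : Set X} (hs : s ⊆ closure (interior s)) {f g : X → Ω → β}
    (hf : Measurable (Function.uncurry f)) (hg : Measurable (Function.uncurry g))
    (hfc : ∀ᵐ ω ∂ℙ, ContinuousOn (f · ω) s) (hgc : ∀ᵐ ω ∂ℙ, ContinuousOn (g · ω) s)
    (hfg : ∀ᵐ x ∂μ.restrict s, ∀ᵐ ω ∂ℙ, f x ω = g x ω) :
    ∀ᵐ ω ∂ℙ, EqOn (f · ω) (g · ω) s := by
  have hfg' := (Measure.ae_ae_comm (p := fun x ω => f x ω = g x ω)
    (measurableSet_eq_fun hf hg)).1 hfg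
  filter_upwards [hfg', hfc, hgc] with ω hω hfω hgω
  exact Measure.eqOn_of_ae_eq hω hfω hgω hs

theorem intervalIntegral_congr_of_ae_restrict_Icc {E : Type*} [NormedAddCommGroup E]
    [NormedSpace ℝ E] {f g : ℝ → E} {a b t : ℝ} (ht : t ∈ Icc a b)
    (hfg : ∀ᵐ s ∂volume.restrict (Icc a b), f s = g s) :
    ∫ s in a..t, f s = ∫ s in a..t, g s :=
  intervalIntegral.integral_congr_ae_restrict (ae_restrict_of_ae_restrict_of_subset
    (uIoc_of_le ht.1 ▸ Ioc_subset_Icc_self.trans (Icc_subset_Icc_right ht.2)) hfg)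

theorem ae_forall_eq_add_integral_of_ae_ae {Ω : Type*} [MeasurableSpace Ω] {ℙ : Measure Ω}
    [SFinite ℙ] {a b : ℝ} (hab : a < b) {X f : ℝ → Ω → ℝ} (hX : Measurable (Function.uncurry X))
    (hXc : ∀ᵐ ω ∂ℙ, ContinuousOn (X · ω) (Icc a b)) (hf : Measurable (Function.uncurry f))
    (hfi : ∀ᵐ ω ∂ℙ, IntervalIntegrable (f · ω) volume a b)
    (hXf : ∀ᵐ t ∂volume.restrict (Icc a b), ∀ᵐ ω ∂ℙ, X t ω = X a ω + ∫ s in a..t, f s ω) :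
    ∀ᵐ ω ∂ℙ, ∀ t ∈ Icc a b, X t ω = X a ω + ∫ s in a..t, f s ω := by
  refine ae_eqOn_of_ae_ae_eq (closure_interior_Icc hab.ne).symm.subset hX
    ((hX.comp (measurable_const.prodMk measurable_snd)).add
      (measurable_intervalIntegral_of_measurable_uncurry hf a)) hXc ?_ hXf
  filter_upwards [hfi] with ω hω
  have hprim := intervalIntegral.continuousOn_primitive_interval' hω left_mem_uIcc
  rw [uIcc_of_le hab.le] at hprim
  exact continuousOn_const.add hprim

theorem tendsto_sub_one_div_nat_nhdsLT (t : ℝ) :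
    Tendsto (fun n : ℕ => t - 1 / ((n : ℝ) + 1)) atTop (𝓝[<] t) := by
  refine tendsto_nhdsWithin_of_tendsto_nhds_of_eventually_within _ ?_
    (Eventually.of_forall fun n => sub_lt_self t Nat.one_div_pos_of_nat)
  simpa using tendsto_one_div_add_atTop_nhds_zero_nat.const_sub t

theorem ae_tendsto_slope_of_eq_add_integral {F f : ℝ → ℝ} {a b : ℝ}
    (hf : IntervalIntegrable f volume a b) (hF : ∀ t ∈ Icc a b, F t = F a + ∫ s in a..t, f s) :
    ∀ᵐ t ∂volume.restrict (Icc a b),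
      Tendsto (fun n : ℕ => slope F t (t - 1 / ((n : ℝ) + 1))) atTop (𝓝 (f t)) := by
  rw [← Measure.restrict_congr_set Ioo_ae_eq_Icc, ae_restrict_iff' measurableSet_Ioo]
  filter_upwards [hf.ae_hasDerivAt_integral] with t hderiv ht
  have hFt : F =ᶠ[𝓝 t] fun u => F a + ∫ s in a..u, f s :=
    eventually_of_mem (Icc_mem_nhds ht.1 ht.2) hF
  have hFderiv : HasDerivAt F (f t) t :=
    ((hderiv (Ioo_subset_Icc_self.trans Icc_subset_uIcc ht) a left_mem_uIcc).const_add
      _).congr_of_eventuallyEq hFt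
  exact hFderiv.tendsto_slope.comp
    ((tendsto_sub_one_div_nat_nhdsLT t).mono_right (nhdsLT_le_nhdsNE t))

theorem ae_ae_tendsto_slope_of_eq_add_integral {Ω : Type*} [MeasurableSpace Ω] {ℙ : Measure Ω}
    [SFinite ℙ] {a b : ℝ} {X f : ℝ → Ω → ℝ} (hX : Measurable (Function.uncurry X))
    (hf : Measurable (Function.uncurry f)) (hfi : ∀ᵐ ω ∂ℙ, IntervalIntegrable (f · ω) volume a b)
    (hXf : ∀ᵐ ω ∂ℙ, ∀ t ∈ Icc a b, X t ω = X a ω + ∫ s in a..t, f s ω) :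
    ∀ᵐ t ∂volume.restrict (Icc a b), ∀ᵐ ω ∂ℙ,
      Tendsto (fun n : ℕ => slope (X · ω) t (t - 1 / ((n : ℝ) + 1))) atTop (𝓝 (f t ω)) := by
  have hq : ∀ n : ℕ, Measurable fun p : Ω × ℝ => slope (X · p.1) p.2 (p.2 - 1 / ((n : ℝ) + 1)) :=
    fun n => by
      simp only [slope, vsub_eq_sub, smul_eq_mul]
      exact ((measurable_snd.sub_const _).sub measurable_snd).inv.mul
        ((hX.comp ((measurable_snd.sub_const _).prodMk measurable_fst)).sub
          (hX.comp measurable_swap))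
  refine (Measure.ae_ae_comm (measurableSet_tendsto_fun hq (hf.comp measurable_swap))).1 ?_
  filter_upwards [hXf, hfi] with ω hω hωi
  exact ae_tendsto_slope_of_eq_add_integral (F := (X · ω)) hωi hω

theorem condExp_ae_eq_self_of_ae_tendsto {Ω E : Type*} [NormedAddCommGroup E] [NormedSpace ℝ E]
    [CompleteSpace E] {m m₀ : MeasurableSpace Ω} {μ : Measure[m₀] Ω} (hm : m ≤ m₀)
    [SigmaFinite (μ.trim hm)] {f : ℕ → Ω → E} {g : Ω → E}
    (hf : ∀ n, StronglyMeasurable[m] (f n)) (hlim : ∀ᵐ ω ∂μ, Tendsto (f · ω) atTop (𝓝 (g ω)))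
    (hg : Integrable g μ) : μ[g | m] =ᵐ[μ] g := by
  refine condExp_of_aestronglyMeasurable' hm
    ⟨fun ω => limUnder atTop (f · ω), @StronglyMeasurable.limUnder _ _ _ m _ _ _ _ _ _ _ hf, ?_⟩
    hg
  filter_upwards [hlim] with ω hω
  exact hω.limUnder_eq.symm

/-- The paper's `𝓕^Y_t = σ(Y_s : s ≤ t)`. -/
abbrev pathSigma {T : ℝ} {E Ω : Type*} [TopologicalSpace E] [MeasurableSpace E]
    (Y : Ω → C(Icc (0 : ℝ) T, E)) (t : ℝ) : MeasurableSpace Ω :=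
  ⨆ (s : Icc (0 : ℝ) T) (_ : (s : ℝ) ≤ t), MeasurableSpace.comap (fun ω => Y ω s) inferInstance

section pathSigma

variable {T : ℝ} {E Ω : Type*} [TopologicalSpace E] [MeasurableSpace E] {m₀ : MeasurableSpace Ω}
  {Y : Ω → C(Icc (0 : ℝ) T, E)}

theorem pathSigma_le (hY : ∀ s, Measurable fun ω => Y ω s) (t : ℝ) : pathSigma Y t ≤ m₀ :=
  iSup₂_le fun s _ => (hY s).comap_le

theorem measurable_pathSigma_projIcc (hT : 0 ≤ T) {t u : ℝ} (ht : t ∈ Icc 0 T) (hu : u ≤ t) :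
    Measurable[pathSigma Y t] fun ω => Y ω (projIcc 0 T hT u) := by
  have hle : (projIcc 0 T hT u : ℝ) ≤ t := by
    simpa [projIcc_of_mem hT ht] using Subtype.coe_le_coe.2 (monotone_projIcc hT hu)
  exact Measurable.of_comap_le (le_iSup₂_of_le (projIcc 0 T hT u) hle le_rfl)

theorem measurable_pathSigma_slope (hT : 0 ≤ T) {h : E → ℝ} (hh : Measurable h) {t δ : ℝ}
    (ht : t ∈ Icc 0 T) (hδ : 0 ≤ δ) :
    Measurable[pathSigma Y t] fun ω => slope (fun u => h (Y ω (projIcc 0 T hT u))) t (t - δ) := by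
  simp only [slope, vsub_eq_sub, smul_eq_mul]
  exact measurable_const.mul ((hh.comp (measurable_pathSigma_projIcc hT ht (by linarith))).sub
    (hh.comp (measurable_pathSigma_projIcc hT ht le_rfl)))

end pathSigma

theorem projection_lemma_zero_noise_general
    {T : ℝ} (hT : 0 < T)
    {E : Type} [TopologicalSpace E] [PolishSpace E] [MeasurableSpace E] [BorelSpace E]
    [MeasurableSpace C(Icc (0 : ℝ) T, E)] [BorelSpace C(Icc (0 : ℝ) T, E)]
    {Ω : Type} [MeasurableSpace Ω] (ℙ : Measure Ω) [IsProbabilityMeasure ℙ]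
    -- the continuous process Y, as a random continuous path
    (Y : Ω → C(Icc (0 : ℝ) T, E))
    (hYmeas : ∀ t : Icc (0 : ℝ) T, Measurable fun ω => Y ω t)
    (h : E → ℝ) (hh : Continuous h)
    -- the jointly measurable integrand a with E ∫₀ᵀ |a_t| dt < ∞
    (a : ℝ → Ω → ℝ)
    (hameas : Measurable (Function.uncurry a))
    (haint : Integrable (Function.uncurry a)
      (((volume : Measure ℝ).restrict (Icc (0 : ℝ) T)).prod ℙ))
    -- the dynamics: for a.e. t, a.s., h(Y_t) = h(Y_0) + ∫₀ᵗ a_s ds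
    (hdyn : ∀ᵐ t ∂((volume : Measure ℝ).restrict (Icc (0 : ℝ) T)), ∀ᵐ ω ∂ℙ,
      h (Y ω (projIcc 0 T hT.le t)) =
        h (Y ω ⟨0, left_mem_Icc.mpr hT.le⟩) + ∫ s in (0 : ℝ)..t, a s ω)
    -- â : progressively measurable version of the conditional expectation
    (ahat : ℝ → C(Icc (0 : ℝ) T, E) → ℝ)
    (hahatmeas : Measurable (Function.uncurry ahat))
    (hcond : ∀ᵐ t ∂((volume : Measure ℝ).restrict (Icc (0 : ℝ) T)),
      (fun ω => ahat t (Y ω)) =ᵐ[ℙ]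
        MeasureTheory.condExp
          (⨆ (s : Icc (0 : ℝ) T) (_ : (s : ℝ) ≤ t),
            MeasurableSpace.comap (fun ω => Y ω s) inferInstance) ℙ (a t)) :
    ∀ᵐ ω ∂ℙ, ∀ t ∈ Icc (0 : ℝ) T,
      h (Y ω (projIcc 0 T hT.le t)) =
        h (Y ω ⟨0, left_mem_Icc.mpr hT.le⟩) + ∫ s in (0 : ℝ)..t, ahat s (Y ω) := by
  set X : ℝ → Ω → ℝ := fun t ω => h (Y ω (projIcc 0 T hT.le t))
  have hX : Measurable (Function.uncurry X) :=
    measurable_uncurry_of_continuous_of_measurable (fun ω => by fun_prop)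
      fun t => hh.measurable.comp (hYmeas _)
  have hX₀ : ∀ ω, X 0 ω = h (Y ω ⟨0, left_mem_Icc.mpr hT.le⟩) := fun ω => by
    simp only [X, projIcc_left]
  have hint : ∀ᵐ ω ∂ℙ, IntervalIntegrable (fun s => a s ω) volume 0 T := by
    filter_upwards [haint.prod_left_ae] with ω hω
    exact (intervalIntegrable_iff_integrableOn_Icc_of_le hT.le).2 hω
  have hpath := ae_forall_eq_add_integral_of_ae_ae hT hX (ae_of_all _ fun ω => by fun_prop)
    hameas hint (by simpa only [hX₀] using hdyn)
  have hahat : ∀ᵐ t ∂(volume : Measure ℝ).restrict (Icc (0 : ℝ) T), ∀ᵐ ω ∂ℙ,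
      ahat t (Y ω) = a t ω := by
    filter_upwards [hcond, ae_ae_tendsto_slope_of_eq_add_integral hX hameas hint hpath,
      haint.prod_right_ae, ae_restrict_mem measurableSet_Icc] with t hct hlim hat ht
    exact hct.trans (condExp_ae_eq_self_of_ae_tendsto (pathSigma_le hYmeas t)
      (fun n => (measurable_pathSigma_slope hT.le hh.measurable ht
        (by positivity)).stronglyMeasurable) hlim hat)
  have hYm : Measurable Y := ContinuousMap.measurable_of_measurable_eval hYmeas
  rw [Measure.ae_ae_comm (p := fun t ω => ahat t (Y ω) = a t ω) (measurableSet_eq_fun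
    (hahatmeas.comp (measurable_fst.prodMk (hYm.comp measurable_snd))) hameas)] at hahat
  filter_upwards [hpath, hahat] with ω hω hωahat t ht
  rw [intervalIntegral_congr_of_ae_restrict_Icc ht hωahat, ← hX₀]
  exact hω t ht

/-- Projection lemma (zero noise case): if `h(Y_t) = h(Y_0) + ∫₀ᵗ a_s ds` a.s. for a.e. `t`,
and `â(t,Y)` is a progressively measurable version of `E[a_t | 𝓕^Y_t]`, then almost surely
`h(Y_t) = h(Y_0) + ∫₀ᵗ â(s,Y) ds` for all `t ∈ [0,T]`. -/
theorem projection_lemma_zero_noise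
    {T : ℝ} (hT : 0 < T)
    {E : Type} [TopologicalSpace E] [PolishSpace E] [MeasurableSpace E] [BorelSpace E]
    [MeasurableSpace C(Icc (0 : ℝ) T, E)] [BorelSpace C(Icc (0 : ℝ) T, E)]
    {Ω : Type} [MeasurableSpace Ω] (ℙ : Measure Ω) [IsProbabilityMeasure ℙ]
    -- the continuous process Y, as a random continuous path
    (Y : Ω → C(Icc (0 : ℝ) T, E))
    (hYmeas : ∀ t : Icc (0 : ℝ) T, Measurable fun ω => Y ω t)
    (h : E → ℝ) (hh : Continuous h)
    -- the jointly measurable integrand a with E ∫₀ᵀ |a_t| dt < ∞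
    (a : ℝ → Ω → ℝ)
    (hameas : Measurable (Function.uncurry a))
    (haint : Integrable (Function.uncurry a)
      (((volume : Measure ℝ).restrict (Icc (0 : ℝ) T)).prod ℙ))
    -- the dynamics: for a.e. t, a.s., h(Y_t) = h(Y_0) + ∫₀ᵗ a_s ds
    (hdyn : ∀ᵐ t ∂((volume : Measure ℝ).restrict (Icc (0 : ℝ) T)), ∀ᵐ ω ∂ℙ,
      h (Y ω (projIcc 0 T hT.le t)) =
        h (Y ω ⟨0, left_mem_Icc.mpr hT.le⟩) + ∫ s in (0 : ℝ)..t, a s ω)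
    -- â : progressively measurable version of the conditional expectation
    (ahat : ℝ → C(Icc (0 : ℝ) T, E) → ℝ)
    (hahatmeas : Measurable (Function.uncurry ahat))
    (hahatprog : ∀ t ∈ Icc (0 : ℝ) T, ∀ x y : C(Icc (0 : ℝ) T, E),
      (∀ s : Icc (0 : ℝ) T, (s : ℝ) ≤ t → x s = y s) → ahat t x = ahat t y)
    (hcond : ∀ᵐ t ∂((volume : Measure ℝ).restrict (Icc (0 : ℝ) T)),
      (fun ω => ahat t (Y ω)) =ᵐ[ℙ]
        MeasureTheory.condExp
          (⨆ (s : Icc (0 : ℝ) T) (_ : (s : ℝ) ≤ t),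
            MeasurableSpace.comap (fun ω => Y ω s) inferInstance) ℙ (a t)) :
    ∀ᵐ ω ∂ℙ, ∀ t ∈ Icc (0 : ℝ) T,
      h (Y ω (projIcc 0 T hT.le t)) =
        h (Y ω ⟨0, left_mem_Icc.mpr hT.le⟩) + ∫ s in (0 : ℝ)..t, ahat s (Y ω) :=
  projection_lemma_zero_noise_general hT ℙ Y hYmeas h hh a hameas haint hdyn ahat hahatmeas hcond
end

section
/- Let E and F be Polish spaces, (Ω,𝓕,ℙ) a probability space, and η : Ω → C([0,T];E) and X : Ω → C([0,T];F) measurable maps. Let P : C([0,T];E) → 𝒫(C([0,T];F)), e ↦ P^e, be Borel measurable and non-anticipative, meaning: for every t ∈ [0,T] and all e, e' ∈ C([0,T];E) with e_s = e'_s for all s ∈ [0,t], the measures P^e and P^{e'} agree on 𝓑_t^F. Assume that P^η is a version of the conditional law of X given σ(η), i.e., for every Borel set C ⊆ C([0,T];F), ℙ(X ∈ C | σ(η)) = P^η(C) almost surely. Then for every t ∈ [0,T], the σ-algebras 𝓕^X_t := X^{-1}(𝓑_t^F) and σ(η) are conditionally independent given 𝓕^η_t := η^{-1}(𝓑_t^E).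 -/
open MeasureTheory Set

noncomputable section

/-- Conditional independence of two sub-σ-algebras `mA`, `mB` given a third one `mC`:
`E[ξζ | mC] = E[ξ | mC]·E[ζ | mC]` a.s. for all bounded `mA`-measurable `ξ` and bounded
`mB`-measurable `ζ`. -/
def CondIndepSigmaAlgebras {Ω : Type*} [MeasurableSpace Ω] (ℙ : Measure Ω)
    (mA mB mC : MeasurableSpace Ω) : Prop :=
  ∀ ξ ζ : Ω → ℝ, Measurable[mA] ξ → Measurable[mB] ζ →
    (∃ C : ℝ, ∀ ω, |ξ ω| ≤ C) → (∃ C : ℝ, ∀ ω, |ζ ω| ≤ C) →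
    MeasureTheory.condExp mC ℙ (fun ω => ξ ω * ζ ω) =ᵐ[ℙ]
      fun ω => MeasureTheory.condExp mC ℙ ξ ω * MeasureTheory.condExp mC ℙ ζ ω

/-- The canonical filtration `𝓑_t` on path space `C([0,T];E)`, generated by the
evaluation maps at times `s ≤ t`. -/
def pathFiltration (T : ℝ) (E : Type*) [TopologicalSpace E] [MeasurableSpace E] (t : ℝ) :
    MeasurableSpace C(Icc (0 : ℝ) T, E) :=
  ⨆ (s : Icc (0 : ℝ) T) (_ : (s : ℝ) ≤ t),
    MeasurableSpace.comap (fun x => x s) inferInstance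

/-!
Fix `t` and a bounded `𝓕^X_t`-measurable `ξ`, so `ξ = f ∘ X` with `f` `𝓑_t^F`-measurable
(Doob–Dynkin). As `P^η` is the conditional law of `X` given `η`, `E[ξ | σ(η)] = g ∘ η` with
`g e = ∫ f dP^e`; by non-anticipativity `g e` depends only on `e` up to time `t`, so
`g = g ∘ stop_t` is `𝓑_t^E`-measurable. Hence `E[ξ | σ(η)]` is already `𝓕^η_t`-measurable, and
the tower property together with pulling out known factors gives conditional independence.
The stopped path `stop_t e = e ∘ (· ∧ t)` is `𝓑_t^E`-measurable because the Borel σ-algebra of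
`C([0,T];E)` is generated by the evaluations: restricting to a countable dense set of times is a
continuous injection of a Polish space, hence a measurable embedding (Lusin–Souslin).
-/

section CondIndep

variable {Ω : Type*} {mA mB mC : MeasurableSpace Ω} [m : MeasurableSpace Ω] {μ : Measure Ω}

theorem condIndepSigmaAlgebras_of_aestronglyMeasurable_condExp [IsFiniteMeasure μ]
    (hA : mA ≤ m) (hCB : mC ≤ mB) (hB : mB ≤ m)
    (h : ∀ ξ : Ω → ℝ, Measurable[mA] ξ → Integrable ξ μ → AEStronglyMeasurable[mC] (μ[ξ|mB]) μ) :
    CondIndepSigmaAlgebras μ mA mB mC := by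
  intro ξ ζ hξ hζ ⟨Cξ, hCξ⟩ ⟨Cζ, hCζ⟩
  have hξ_int : Integrable ξ μ := .of_bound (hξ.mono hA le_rfl).aestronglyMeasurable Cξ
    (.of_forall fun ω => (Real.norm_eq_abs _).trans_le (hCξ ω))
  have hζ_bdd : ∀ᵐ ω ∂μ, ‖ζ ω‖ ≤ Cζ := .of_forall fun ω => (Real.norm_eq_abs _).trans_le (hCζ ω)
  have hζ_meas : AEStronglyMeasurable ζ μ := (hζ.mono hB le_rfl).aestronglyMeasurable
  have hζ_int : Integrable ζ μ := .of_bound hζ_meas Cζ hζ_bdd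
  have hξB := h ξ hξ hξ_int
  have hξC : μ[ξ|mC] =ᵐ[μ] μ[ξ|mB] :=
    (condExp_condExp_of_le hCB hB).symm.trans
      (condExp_of_aestronglyMeasurable' (hCB.trans hB) hξB integrable_condExp)
  calc μ[ξ * ζ|mC]
      =ᵐ[μ] μ[μ[ξ * ζ|mB]|mC] := (condExp_condExp_of_le hCB hB).symm
    _ =ᵐ[μ] μ[μ[ξ|mB] * ζ|mC] := condExp_congr_ae <|
        condExp_mul_of_stronglyMeasurable_right hζ.stronglyMeasurable
          (hξ_int.mul_bdd hζ_meas hζ_bdd) hξ_int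
    _ =ᵐ[μ] μ[ξ|mB] * μ[ζ|mC] := condExp_mul_of_aestronglyMeasurable_left hξB
          (integrable_condExp.mul_bdd hζ_meas hζ_bdd) hζ_int
    _ =ᵐ[μ] μ[ξ|mC] * μ[ζ|mC] := hξC.symm.mul (ae_eq_refl _)

end CondIndep

section KernelCondLaw

open ProbabilityTheory

variable {Ω α β : Type*} [MeasurableSpace Ω] [MeasurableSpace α] [MeasurableSpace β]
  {μ : Measure Ω} {η : Ω → α} {X : Ω → β} {κ : Kernel α β}

theorem map_prodMk_eq_compProd_of_condExp_indicator [IsFiniteMeasure μ] [IsFiniteKernel κ]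
    (hη : Measurable η) (hX : Measurable X)
    (hκ : ∀ C : Set β, MeasurableSet C →
      (fun ω => (κ (η ω) C).toReal) =ᵐ[μ]
        μ[(X ⁻¹' C).indicator fun _ => (1 : ℝ)|MeasurableSpace.comap η inferInstance]) :
    μ.map (fun ω => (η ω, X ω)) = μ.map η ⊗ₘ κ := by
  refine Measure.ext_prod fun {s u} hs hu => ?_
  rw [Measure.map_apply (hη.prodMk hX) (hs.prod hu), mk_preimage_prod,
    Measure.compProd_apply_prod hs hu, setLIntegral_map hs (κ.measurable_coe hu) hη]
  have h_real : ∫ ω in η ⁻¹' s, (κ (η ω) u).toReal ∂μ = μ.real (η ⁻¹' s ∩ X ⁻¹' u) := by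
    rw [integral_congr_ae (ae_restrict_of_ae (hκ u hu)),
      setIntegral_condExp hη.comap_le ((integrable_const _).indicator (hX hu)) ⟨s, hs, rfl⟩,
      integral_indicator_const _ (hX hu), measureReal_restrict_apply (hX hu), smul_eq_mul,
      mul_one, inter_comm]
  rw [← ofReal_measureReal, ← h_real, ofReal_integral_eq_lintegral_ofReal]
  · exact setLIntegral_congr_fun (hη hs) fun ω _ => ENNReal.ofReal_toReal (measure_ne_top _ _)
  · exact (integrable_condExp.congr (hκ u hu).symm).integrableOn
  · exact .of_forall fun _ => ENNReal.toReal_nonneg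

theorem condExp_comp_ae_eq_integral_of_condExp_indicator [IsProbabilityMeasure μ]
    [IsFiniteKernel κ] [StandardBorelSpace β] (hη : Measurable η) (hX : Measurable X)
    (hκ : ∀ C : Set β, MeasurableSet C →
      (fun ω => (κ (η ω) C).toReal) =ᵐ[μ]
        μ[(X ⁻¹' C).indicator fun _ => (1 : ℝ)|MeasurableSpace.comap η inferInstance])
    {f : β → ℝ} (hf : StronglyMeasurable f) (hfX : Integrable (f ∘ X) μ) :
    μ[f ∘ X|MeasurableSpace.comap η inferInstance] =ᵐ[μ] fun ω => ∫ y, f y ∂κ (η ω) := by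
  have : Nonempty β := ⟨X (nonempty_of_isProbabilityMeasure μ).some⟩
  have h_condDistrib : ∀ᵐ ω ∂μ, condDistrib X η μ (η ω) = κ (η ω) := ae_of_ae_map hη.aemeasurable <|
    condDistrib_ae_eq_of_measure_eq_compProd_of_measurable hη hX
      (map_prodMk_eq_compProd_of_condExp_indicator hη hX hκ)
  filter_upwards [condExp_ae_eq_integral_condDistrib hη hX.aemeasurable hf hfX, h_condDistrib]
    with ω h_int h_eq
  rwa [← h_eq]

end KernelCondLaw

namespace ContinuousMap

variable {X E : Type*} [TopologicalSpace X] [CompactSpace X] [T2Space X]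
  [SecondCountableTopology X] [TopologicalSpace E] [PolishSpace E]

instance polishSpace : PolishSpace C(X, E) := by
  let := TopologicalSpace.upgradeIsCompletelyMetrizable E
  infer_instance

theorem measurableSpace_eq_iSup_comap_eval [MeasurableSpace E] [BorelSpace E]
    [MeasurableSpace C(X, E)] [BorelSpace C(X, E)] :
    ‹MeasurableSpace C(X, E)› = ⨆ x : X, MeasurableSpace.comap (fun f : C(X, E) => f x) ‹_› := by
  refine le_antisymm ?_ (iSup_le fun x => (continuous_eval_const x).measurable.comap_le)
  obtain ⟨D, hD_countable, hD_dense⟩ := TopologicalSpace.exists_countable_dense X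
  have : Countable D := hD_countable.to_subtype
  have h_emb : MeasurableEmbedding fun (f : C(X, E)) (x : D) => f x := by
    refine Continuous.measurableEmbedding (continuous_pi fun x => continuous_eval_const _)
      fun f g hfg => ContinuousMap.ext <| congrFun ?_
    exact hD_dense.denseRange_val.equalizer f.continuous g.continuous
      (funext fun x => congrFun hfg x)
  rw [← h_emb.comap_eq, MeasurableSpace.pi, MeasurableSpace.comap_iSup]
  refine iSup_le fun x => ?_
  rw [MeasurableSpace.comap_comp]
  exact le_iSup (fun x : X => MeasurableSpace.comap (fun f : C(X, E) => f x) ‹_›) (x : X)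

end ContinuousMap

section PathSpace

variable {T t : ℝ} {E : Type*} [TopologicalSpace E] [MeasurableSpace E]

theorem pathFiltration_le [BorelSpace E] [MeasurableSpace C(Icc (0 : ℝ) T, E)]
    [BorelSpace C(Icc (0 : ℝ) T, E)] :
    pathFiltration T E t ≤ ‹MeasurableSpace C(Icc (0 : ℝ) T, E)› :=
  iSup₂_le fun s _ => (continuous_eval_const s).measurable.comap_le

def stopAt (ht : t ∈ Icc (0 : ℝ) T) : C(Icc (0 : ℝ) T, Icc (0 : ℝ) T) where
  toFun s := ⟨min s t, le_min s.2.1 ht.1, (min_le_right _ _).trans ht.2⟩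
  continuous_toFun := (continuous_subtype_val.min continuous_const).subtype_mk _

theorem stopAt_of_le (ht : t ∈ Icc (0 : ℝ) T) {s : Icc (0 : ℝ) T} (hs : (s : ℝ) ≤ t) :
    stopAt ht s = s :=
  Subtype.ext (min_eq_left hs)

theorem measurable_comp_stopAt [PolishSpace E] [BorelSpace E]
    [MeasurableSpace C(Icc (0 : ℝ) T, E)] [BorelSpace C(Icc (0 : ℝ) T, E)]
    (ht : t ∈ Icc (0 : ℝ) T) :
    Measurable[pathFiltration T E t] fun e : C(Icc (0 : ℝ) T, E) => e.comp (stopAt ht) := by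
  rw [measurable_iff_comap_le,
    ContinuousMap.measurableSpace_eq_iSup_comap_eval (X := Icc (0 : ℝ) T) (E := E),
    MeasurableSpace.comap_iSup]
  refine iSup_le fun s => ?_
  rw [MeasurableSpace.comap_comp]
  exact le_iSup₂ (f := fun (r : Icc (0 : ℝ) T) (_ : (r : ℝ) ≤ t) =>
    MeasurableSpace.comap (fun e : C(Icc (0 : ℝ) T, E) => e r) _) (stopAt ht s) (min_le_right _ _)

theorem measurable_pathFiltration_of_dependsOn [PolishSpace E] [BorelSpace E]
    [MeasurableSpace C(Icc (0 : ℝ) T, E)] [BorelSpace C(Icc (0 : ℝ) T, E)]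
    {γ : Type*} [MeasurableSpace γ] {g : C(Icc (0 : ℝ) T, E) → γ} (hg : Measurable g)
    (ht : t ∈ Icc (0 : ℝ) T)
    (h_dep : ∀ e e' : C(Icc (0 : ℝ) T, E), (∀ s : Icc (0 : ℝ) T, (s : ℝ) ≤ t → e s = e' s) →
      g e = g e') :
    Measurable[pathFiltration T E t] g := by
  have h_stop : g = fun e => g (e.comp (stopAt ht)) :=
    funext fun e => h_dep _ _ fun s hs => by simp [stopAt_of_le ht hs]
  rw [h_stop]
  exact hg.comp (measurable_comp_stopAt ht)

end PathSpace

section PathSpaceKernel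

open ProbabilityTheory

variable {T t : ℝ} {E F : Type*} [TopologicalSpace E] [PolishSpace E] [MeasurableSpace E]
  [BorelSpace E] [TopologicalSpace F] [MeasurableSpace F] [BorelSpace F]
  [MeasurableSpace C(Icc (0 : ℝ) T, E)] [BorelSpace C(Icc (0 : ℝ) T, E)]
  [MeasurableSpace C(Icc (0 : ℝ) T, F)] [BorelSpace C(Icc (0 : ℝ) T, F)]

theorem integral_eq_of_eq_on_pathFiltration {ν ν' : Measure C(Icc (0 : ℝ) T, F)}
    (h : ∀ C, MeasurableSet[pathFiltration T F t] C → ν C = ν' C)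
    {f : C(Icc (0 : ℝ) T, F) → ℝ} (hf : Measurable[pathFiltration T F t] f) :
    ∫ y, f y ∂ν = ∫ y, f y ∂ν' := by
  have h_trim : ν.trim pathFiltration_le = ν'.trim pathFiltration_le :=
    @Measure.ext _ (pathFiltration T F t) _ _ fun C hC => by
      rw [trim_measurableSet_eq _ hC, trim_measurableSet_eq _ hC, h C hC]
  rw [integral_trim pathFiltration_le hf.stronglyMeasurable, h_trim,
    ← integral_trim pathFiltration_le hf.stronglyMeasurable]

theorem measurable_pathFiltration_integral_kernel
    {κ : Kernel C(Icc (0 : ℝ) T, E) C(Icc (0 : ℝ) T, F)} (ht : t ∈ Icc (0 : ℝ) T)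
    (hκ : ∀ e e' : C(Icc (0 : ℝ) T, E), (∀ s : Icc (0 : ℝ) T, (s : ℝ) ≤ t → e s = e' s) →
      ∀ C, MeasurableSet[pathFiltration T F t] C → κ e C = κ e' C)
    {f : C(Icc (0 : ℝ) T, F) → ℝ} (hf : Measurable[pathFiltration T F t] f) :
    Measurable[pathFiltration T E t] fun e => ∫ y, f y ∂κ e :=
  measurable_pathFiltration_of_dependsOn
    ((hf.mono pathFiltration_le le_rfl).stronglyMeasurable.integral_kernel).measurable ht
    fun e e' h_agree => integral_eq_of_eq_on_pathFiltration (hκ e e' h_agree) hf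

end PathSpaceKernel

theorem nonanticipative_kernel_conditional_independence_general
    {T : ℝ}
    {E F : Type} [TopologicalSpace E] [PolishSpace E] [MeasurableSpace E] [BorelSpace E]
    [TopologicalSpace F] [PolishSpace F] [MeasurableSpace F] [BorelSpace F]
    [MeasurableSpace C(Icc (0 : ℝ) T, E)] [BorelSpace C(Icc (0 : ℝ) T, E)]
    [MeasurableSpace C(Icc (0 : ℝ) T, F)] [BorelSpace C(Icc (0 : ℝ) T, F)]
    {Ω : Type} [MeasurableSpace Ω] (ℙ : Measure Ω) [IsProbabilityMeasure ℙ]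
    (η : Ω → C(Icc (0 : ℝ) T, E)) (hη : Measurable η)
    (X : Ω → C(Icc (0 : ℝ) T, F)) (hX : Measurable X)
    (P : C(Icc (0 : ℝ) T, E) → Measure C(Icc (0 : ℝ) T, F))
    (hPprob : ∀ e, IsProbabilityMeasure (P e))
    (hPmeas : Measurable P)
    -- non-anticipativity: P^e and P^{e'} agree on 𝓑_t^F whenever e = e' on [0,t]
    (hPnonant : ∀ t ∈ Icc (0 : ℝ) T, ∀ e e' : C(Icc (0 : ℝ) T, E),
      (∀ s : Icc (0 : ℝ) T, (s : ℝ) ≤ t → e s = e' s) →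
      ∀ C : Set C(Icc (0 : ℝ) T, F), MeasurableSet[pathFiltration T F t] C →
        P e C = P e' C)
    -- P^η is a version of the conditional law of X given σ(η)
    (hcondlaw : ∀ C : Set C(Icc (0 : ℝ) T, F), MeasurableSet C →
      (fun ω => ((P (η ω)) C).toReal) =ᵐ[ℙ]
        MeasureTheory.condExp (MeasurableSpace.comap η inferInstance) ℙ
          ((X ⁻¹' C).indicator fun _ => (1 : ℝ))) :
    ∀ t ∈ Icc (0 : ℝ) T,
      CondIndepSigmaAlgebras ℙ
        (MeasurableSpace.comap X (pathFiltration T F t))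
        (MeasurableSpace.comap η inferInstance)
        (MeasurableSpace.comap η (pathFiltration T E t)) := by
  intro t ht
  let κ : ProbabilityTheory.Kernel C(Icc (0 : ℝ) T, E) C(Icc (0 : ℝ) T, F) := ⟨P, hPmeas⟩
  have : ProbabilityTheory.IsMarkovKernel κ := ⟨hPprob⟩
  refine condIndepSigmaAlgebras_of_aestronglyMeasurable_condExp
    ((MeasurableSpace.comap_mono pathFiltration_le).trans hX.comap_le)
    (MeasurableSpace.comap_mono pathFiltration_le) hη.comap_le fun ξ hξ hξ_int => ?_
  obtain ⟨f, hf, rfl⟩ := Measurable.exists_eq_measurable_comp (mY := pathFiltration T F t) hξ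
  have h_cond := condExp_comp_ae_eq_integral_of_condExp_indicator (κ := κ) hη hX hcondlaw
    (hf.mono pathFiltration_le le_rfl).stronglyMeasurable hξ_int
  exact ((measurable_pathFiltration_integral_kernel ht (hPnonant t ht) hf).comp
    (Measurable.of_comap_le le_rfl)).aestronglyMeasurable.congr h_cond.symm

/-- If the conditional law of `X` given `η` is given by a non-anticipative Borel kernel
`e ↦ P^e`, then `𝓕^X_t` and `σ(η)` are conditionally independent given `𝓕^η_t`. -/
theorem nonanticipative_kernel_conditional_independence
    {T : ℝ} (hT : 0 < T)
    {E F : Type} [TopologicalSpace E] [PolishSpace E] [MeasurableSpace E] [BorelSpace E]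
    [TopologicalSpace F] [PolishSpace F] [MeasurableSpace F] [BorelSpace F]
    [MeasurableSpace C(Icc (0 : ℝ) T, E)] [BorelSpace C(Icc (0 : ℝ) T, E)]
    [MeasurableSpace C(Icc (0 : ℝ) T, F)] [BorelSpace C(Icc (0 : ℝ) T, F)]
    {Ω : Type} [MeasurableSpace Ω] (ℙ : Measure Ω) [IsProbabilityMeasure ℙ]
    (η : Ω → C(Icc (0 : ℝ) T, E)) (hη : Measurable η)
    (X : Ω → C(Icc (0 : ℝ) T, F)) (hX : Measurable X)
    (P : C(Icc (0 : ℝ) T, E) → Measure C(Icc (0 : ℝ) T, F))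
    (hPprob : ∀ e, IsProbabilityMeasure (P e))
    (hPmeas : Measurable P)
    -- non-anticipativity: P^e and P^{e'} agree on 𝓑_t^F whenever e = e' on [0,t]
    (hPnonant : ∀ t ∈ Icc (0 : ℝ) T, ∀ e e' : C(Icc (0 : ℝ) T, E),
      (∀ s : Icc (0 : ℝ) T, (s : ℝ) ≤ t → e s = e' s) →
      ∀ C : Set C(Icc (0 : ℝ) T, F), MeasurableSet[pathFiltration T F t] C →
        P e C = P e' C)
    -- P^η is a version of the conditional law of X given σ(η)
    (hcondlaw : ∀ C : Set C(Icc (0 : ℝ) T, F), MeasurableSet C →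
      (fun ω => ((P (η ω)) C).toReal) =ᵐ[ℙ]
        MeasureTheory.condExp (MeasurableSpace.comap η inferInstance) ℙ
          ((X ⁻¹' C).indicator fun _ => (1 : ℝ))) :
    ∀ t ∈ Icc (0 : ℝ) T,
      CondIndepSigmaAlgebras ℙ
        (MeasurableSpace.comap X (pathFiltration T F t))
        (MeasurableSpace.comap η inferInstance)
        (MeasurableSpace.comap η (pathFiltration T E t)) :=
  nonanticipative_kernel_conditional_independence_general ℙ η hη X hX P hPprob hPmeas hPnonant
    hcondlaw

end
end

section
/- Let (Ω,𝓕,ℙ) be a probability space, 𝓖 ⊆ 𝓕 a sub-σ-algebra, η : Ω → E a random variable with values in a measurable space E, Z : Ω → S a random variable with values in a measurable space S, and ν a probability measure on S. Assume that for every bounded measurable φ : S → ℝ and every bounded 𝓖-measurable random variable h, E[ h·φ(Z) | σ(η) ] = E[ h | σ(η) ] · ∫ φ dν almost surely. Then Z has law ν and σ(Z) is independent of the σ-algebra 𝓖 ∨ σ(η) generated by 𝓖 and η. -/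
/-!
Taking `φ = 1_B` and `h = 1_G` with `G ∈ 𝓖`, and integrating the factorization over a set
`H ∈ σ(η)`, gives `ℙ(Z⁻¹ B ∩ G ∩ H) = ν(B) ℙ(G ∩ H)`. For `G = H = Ω` this says that `Z` has
law `ν`; as the sets `G ∩ H` form a π-system generating `𝓖 ∨ σ(η)`, it is then exactly the
independence of `σ(Z)` and `𝓖 ∨ σ(η)`.
-/

open MeasureTheory MeasurableSpace Set

section

variable {Ω : Type*}

theorem Set.abs_indicator_one_le_one (s : Set Ω) (x : Ω) : |s.indicator (1 : Ω → ℝ) x| ≤ 1 := by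
  rw [← Real.norm_eq_abs]; exact (norm_indicator_le_norm_self 1 x).trans_eq norm_one

theorem isPiSystem_image2_inter {C D : Set (Set Ω)} (hC : IsPiSystem C) (hD : IsPiSystem D) :
    IsPiSystem (image2 (· ∩ ·) C D) := by
  rintro _ ⟨s₁, hs₁, t₁, ht₁, rfl⟩ _ ⟨s₂, hs₂, t₂, ht₂, rfl⟩ hne
  have hst : (s₁ ∩ s₂ ∩ (t₁ ∩ t₂)).Nonempty := by
    rwa [inter_inter_inter_comm] at hne
  refine ⟨s₁ ∩ s₂, hC _ hs₁ _ hs₂ (hst.mono inter_subset_left), t₁ ∩ t₂,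
    hD _ ht₁ _ ht₂ (hst.mono inter_subset_right), ?_⟩
  exact inter_inter_inter_comm _ _ _ _

theorem MeasurableSpace.sup_eq_generateFrom_image2_inter (m₁ m₂ : MeasurableSpace Ω) :
    m₁ ⊔ m₂ =
      generateFrom (image2 (· ∩ ·) {s | MeasurableSet[m₁] s} {t | MeasurableSet[m₂] t}) := by
  refine le_antisymm (sup_le ?_ ?_) (generateFrom_le ?_)
  · exact fun s hs =>
      measurableSet_generateFrom ⟨s, hs, univ, @MeasurableSet.univ _ m₂, inter_univ s⟩
  · exact fun t ht =>
      measurableSet_generateFrom ⟨univ, @MeasurableSet.univ _ m₁, t, ht, univ_inter t⟩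
  · rintro _ ⟨s, hs, t, ht, rfl⟩
    exact (le_sup_left (b := m₂) s hs).inter (le_sup_right (a := m₁) t ht)

namespace MeasureTheory

theorem setIntegral_eq_mul_of_condExp_eq_mul {m mΩ : MeasurableSpace Ω} {μ : Measure Ω}
    (hm : m ≤ mΩ) [SigmaFinite (μ.trim hm)] {f g : Ω → ℝ} (hf : Integrable f μ)
    (hg : Integrable g μ) {c : ℝ} (hfg : μ[f|m] =ᵐ[μ] fun ω => μ[g|m] ω * c) {s : Set Ω}
    (hs : MeasurableSet[m] s) :
    ∫ ω in s, f ω ∂μ = (∫ ω in s, g ω ∂μ) * c := by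
  rw [← setIntegral_condExp hm hf hs, setIntegral_congr_ae (hm s hs) (hfg.mono fun _ h _ => h),
    integral_mul_const, setIntegral_condExp hm hg hs]

theorem measure_inter_eq_mul_of_condExp_indicator_eq_mul {m mΩ : MeasurableSpace Ω}
    {μ : Measure Ω} [IsFiniteMeasure μ] (hm : m ≤ mΩ) {A G : Set Ω} (hA : MeasurableSet A)
    (hG : MeasurableSet G) {c : ℝ} (hc : 0 ≤ c)
    (hAG : μ[(G ∩ A).indicator 1|m] =ᵐ[μ] fun ω => μ[G.indicator 1|m] ω * c) {H : Set Ω}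
    (hH : MeasurableSet[m] H) :
    μ (A ∩ (G ∩ H)) = ENNReal.ofReal c * μ (G ∩ H) := by
  have hreal := setIntegral_eq_mul_of_condExp_eq_mul hm
    ((integrable_const 1).indicator (hG.inter hA)) ((integrable_const 1).indicator hG) hAG hH
  rw [integral_indicator_one (hG.inter hA), integral_indicator_one hG,
    measureReal_restrict_apply (hG.inter hA), measureReal_restrict_apply hG] at hreal
  rw [← ofReal_measureReal, ← ofReal_measureReal, ← ENNReal.ofReal_mul hc, mul_comm, ← hreal,
    ← inter_assoc, inter_comm A]

end MeasureTheory

namespace ProbabilityTheory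

theorem indep_sup_of_measure_inter_inter {m₁ m₂ m₃ mΩ : MeasurableSpace Ω} {μ : Measure Ω}
    [IsZeroOrProbabilityMeasure μ] (h₁ : m₁ ≤ mΩ) (h₂ : m₂ ≤ mΩ) (h₃ : m₃ ≤ mΩ)
    (h : ∀ s t u, MeasurableSet[m₁] s → MeasurableSet[m₂] t → MeasurableSet[m₃] u →
      μ (s ∩ (t ∩ u)) = μ s * μ (t ∩ u)) :
    Indep m₁ (m₂ ⊔ m₃) μ := by
  refine IndepSets.indep h₁ (sup_le h₂ h₃) (@isPiSystem_measurableSet _ m₁)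
    (isPiSystem_image2_inter (@isPiSystem_measurableSet _ m₂) (@isPiSystem_measurableSet _ m₃))
    (@generateFrom_measurableSet _ m₁).symm (sup_eq_generateFrom_image2_inter m₂ m₃) ?_
  rw [IndepSets_iff]
  rintro s _ hs ⟨t, ht, u, hu, rfl⟩
  exact h s t u hs ht hu

end ProbabilityTheory

end

/-- If for all bounded measurable `φ` and all bounded `𝓖`-measurable `h` one has
`E[h·φ(Z) | σ(η)] = E[h | σ(η)]·∫φ dν` a.s., then `Z` has law `ν` and `σ(Z)` is
independent of `𝓖 ∨ σ(η)`. -/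
theorem law_and_independence_from_conditional_factorization
    {Ω E S : Type*} [mΩ : MeasurableSpace Ω] [mE : MeasurableSpace E]
    [mS : MeasurableSpace S]
    (ℙ : Measure Ω) [IsProbabilityMeasure ℙ]
    (η : Ω → E) (hη : Measurable η)
    (Z : Ω → S) (hZ : Measurable Z)
    (ν : Measure S) [IsProbabilityMeasure ν]
    (𝓖 : MeasurableSpace Ω) (h𝓖 : 𝓖 ≤ mΩ)
    (hfact : ∀ φ : S → ℝ, Measurable φ → (∃ C : ℝ, ∀ x, |φ x| ≤ C) →
      ∀ h : Ω → ℝ, Measurable[𝓖] h → (∃ C : ℝ, ∀ ω, |h ω| ≤ C) →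
        MeasureTheory.condExp (MeasurableSpace.comap η mE) ℙ
            (fun ω => h ω * φ (Z ω)) =ᵐ[ℙ]
          fun ω => MeasureTheory.condExp (MeasurableSpace.comap η mE) ℙ h ω
            * ∫ x, φ x ∂ν) :
    @Measure.map Ω S mΩ mS Z ℙ = ν ∧
      ProbabilityTheory.Indep (MeasurableSpace.comap Z mS)
        (𝓖 ⊔ MeasurableSpace.comap η mE) ℙ := by
  have hm : MeasurableSpace.comap η mE ≤ mΩ := hη.comap_le
  have hmeasure_inter (B : Set S) (G H : Set Ω) (hB : MeasurableSet B) (hG : MeasurableSet[𝓖] G)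
      (hH : MeasurableSet[MeasurableSpace.comap η mE] H) :
      ℙ (Z ⁻¹' B ∩ (G ∩ H)) = ν B * ℙ (G ∩ H) := by
    have hcond := hfact (B.indicator 1) (measurable_one.indicator hB)
      ⟨1, abs_indicator_one_le_one B⟩ (G.indicator 1)
      ((@measurable_one ℝ Ω _ 𝓖 _).indicator hG) ⟨1, abs_indicator_one_le_one G⟩
    have hprod : (fun ω => G.indicator (1 : Ω → ℝ) ω * B.indicator 1 (Z ω)) =
        (G ∩ Z ⁻¹' B).indicator 1 := by
      rw [inter_indicator_one]; rfl
    rw [hprod, integral_indicator_one hB] at hcond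
    rw [measure_inter_eq_mul_of_condExp_indicator_eq_mul hm (hZ hB) (h𝓖 G hG) measureReal_nonneg
      hcond hH, ofReal_measureReal]
  have hlaw : @Measure.map Ω S mΩ mS Z ℙ = ν := Measure.ext fun B hB => by
    simpa [Measure.map_apply hZ hB] using
      hmeasure_inter B univ univ hB MeasurableSet.univ MeasurableSet.univ
  refine ⟨hlaw, ProbabilityTheory.indep_sup_of_measure_inter_inter hZ.comap_le h𝓖 hm ?_⟩
  rintro _ G H ⟨B, hB, rfl⟩ hG hH
  rw [hmeasure_inter B G H hB hG hH, ← hlaw, Measure.map_apply hZ hB]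
end

section
/- Let (Ω,𝓕,ℙ) be a probability space, S a Polish space with its Borel σ-algebra, U, V : Ω → S random variables, and 𝓖 ⊆ 𝓕 a sub-σ-algebra. Suppose σ(U) and σ(V) are conditionally independent given 𝓖, and U = V almost surely. Then there exists a 𝓖-measurable random variable Ũ : Ω → S with U = Ũ almost surely. -/
/-!
Send `U` and `V` into ℝ through one bounded Borel embedding `φ : S → ℝ` and put
`f = φ ∘ U`, `g = φ ∘ V`. Since `f = g` a.s., conditional independence gives
`E[f² | 𝓖] = E[f g | 𝓖] = E[f | 𝓖] E[g | 𝓖] = E[f | 𝓖]²`, so the conditional variance of `f`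
vanishes and `f = E[f | 𝓖]` a.s. A measurable left inverse of `φ` applied to `E[f | 𝓖]` is then
the required `𝓖`-measurable version of `U`.
-/

open MeasureTheory

noncomputable section

open ProbabilityTheory in
theorem ae_eq_condExp_of_condExp_sq_ae_eq {Ω : Type*} {m m₀ : MeasurableSpace Ω}
    {μ : Measure[m₀] Ω} {X : Ω → ℝ} (hm : m ≤ m₀) [IsFiniteMeasure μ] (hX : MemLp X 2 μ)
    (hsq : μ[X ^ 2 | m] =ᵐ[μ] μ[X | m] ^ 2) : X =ᵐ[μ] μ[X | m] := by
  have hcondVar : Var[X; μ | m] =ᵐ[μ] 0 := by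
    filter_upwards [condVar_ae_eq_condExp_sq_sub_sq_condExp hm hX, hsq] with ω h h'
    rw [h, Pi.sub_apply, h', sub_self, Pi.zero_apply]
  have hint : Integrable ((X - μ[X | m]) ^ 2) μ := (hX.sub (hX.condExp one_le_two)).integrable_sq
  have hzero : ∫ ω, ((X - μ[X | m]) ^ 2) ω ∂μ = 0 := by
    rw [← integral_condExp hm, ← condVar, integral_congr_ae hcondVar, Pi.zero_def, integral_zero]
  filter_upwards [(integral_eq_zero_iff_of_nonneg (fun ω => sq_nonneg _) hint).mp hzero]
    with ω h
  simpa [sub_eq_zero] using h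

theorem CondIndepSigmaAlgebras.ae_eq_condExp_of_ae_eq {Ω : Type*} {m₀ mA mB mC : MeasurableSpace Ω}
    {μ : Measure[m₀] Ω} [IsFiniteMeasure μ] (hci : @CondIndepSigmaAlgebras Ω m₀ μ mA mB mC)
    (hmA : mA ≤ m₀) (hmC : mC ≤ m₀) {ξ ζ : Ω → ℝ} (hξ : Measurable[mA] ξ)
    (hζ : Measurable[mB] ζ) (hξb : ∃ C : ℝ, ∀ ω, |ξ ω| ≤ C) (hζb : ∃ C : ℝ, ∀ ω, |ζ ω| ≤ C)
    (hξζ : ξ =ᵐ[μ] ζ) : ξ =ᵐ[μ] μ[ξ | mC] := by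
  obtain ⟨C, hC⟩ := hξb
  have hL2 : MemLp ξ 2 μ :=
    .of_bound (hξ.mono hmA le_rfl).aestronglyMeasurable C (.of_forall hC)
  refine ae_eq_condExp_of_condExp_sq_ae_eq hmC hL2 ?_
  have hsq : ξ ^ 2 =ᵐ[μ] fun ω => ξ ω * ζ ω := by
    filter_upwards [hξζ] with ω h
    simp [sq, h]
  have hprod : μ[fun ω => ξ ω * ζ ω | mC] =ᵐ[μ] fun ω => μ[ξ | mC] ω * μ[ζ | mC] ω :=
    hci ξ ζ hξ hζ ⟨C, hC⟩ hζb
  filter_upwards [condExp_congr_ae (m := mC) hsq, hprod, condExp_congr_ae (m := mC) hξζ]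
    with ω h₁ h₂ h₃
  rw [h₁, h₂, Pi.pow_apply, sq, h₃]

theorem exists_bounded_measurableEmbedding_real (α : Type*) [MeasurableSpace α]
    [StandardBorelSpace α] : ∃ φ : α → ℝ, MeasurableEmbedding φ ∧ ∀ x, |φ x| ≤ Real.pi / 2 := by
  obtain ⟨e, he⟩ := exists_measurableEmbedding_real α
  refine ⟨Real.arctan ∘ e, ?_, fun x => abs_le.mpr ⟨?_, ?_⟩⟩
  · exact (Real.measurable_arctan.comp he.measurable).measurableEmbedding
      (Real.arctan_injective.comp he.injective)
  · exact (Real.neg_pi_div_two_lt_arctan _).le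
  · exact (Real.arctan_lt_pi_div_two _).le

theorem MeasurableEmbedding.exists_measurable_ae_eq_of_comp_ae_eq {Ω S : Type*}
    [MeasurableSpace S] [Nonempty S] {m m₀ : MeasurableSpace Ω} {μ : Measure[m₀] Ω} {φ : S → ℝ}
    (hφ : MeasurableEmbedding φ) {U : Ω → S} {Y : Ω → ℝ} (hY : Measurable[m] Y)
    (hUY : φ ∘ U =ᵐ[μ] Y) : ∃ U' : Ω → S, Measurable[m] U' ∧ U =ᵐ[μ] U' := by
  obtain ⟨ψ, hψ, hψφ⟩ := hφ.exists_measurable_extend measurable_id fun _ => ‹Nonempty S›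
  refine ⟨ψ ∘ Y, hψ.comp hY, ?_⟩
  filter_upwards [hUY] with ω h
  exact (congrFun hψφ (U ω)).symm.trans (congrArg ψ h)

theorem ae_measurable_of_condIndep_of_ae_eq_general
    {Ω : Type*} [mΩ : MeasurableSpace Ω] (ℙ : Measure Ω) [IsProbabilityMeasure ℙ]
    {S : Type*} [TopologicalSpace S] [PolishSpace S] [mS : MeasurableSpace S]
    [BorelSpace S]
    (U V : Ω → S) (hU : Measurable U)
    (𝓖 : MeasurableSpace Ω) (h𝓖 : 𝓖 ≤ mΩ)
    (hci : @CondIndepSigmaAlgebras Ω mΩ ℙ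
      (MeasurableSpace.comap U mS) (MeasurableSpace.comap V mS) 𝓖)
    (hae : U =ᵐ[ℙ] V) :
    ∃ Utilde : Ω → S, Measurable[𝓖] Utilde ∧ U =ᵐ[ℙ] Utilde := by
  have : Nonempty S := ⟨U (nonempty_of_isProbabilityMeasure ℙ).some⟩
  obtain ⟨φ, hφ, hφb⟩ := exists_bounded_measurableEmbedding_real S
  have hφU : φ ∘ U =ᵐ[ℙ] condExp 𝓖 ℙ (φ ∘ U) :=
    hci.ae_eq_condExp_of_ae_eq hU.comap_le h𝓖 (hφ.measurable.comp (comap_measurable U))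
      (hφ.measurable.comp (comap_measurable V)) ⟨_, fun ω => hφb (U ω)⟩
      ⟨_, fun ω => hφb (V ω)⟩ (hae.fun_comp φ)
  exact hφ.exists_measurable_ae_eq_of_comp_ae_eq stronglyMeasurable_condExp.measurable hφU

/-- If `σ(U)` and `σ(V)` are conditionally independent given `𝓖` and `U = V` a.s., then
`U` agrees a.s. with some `𝓖`-measurable random variable. -/
theorem ae_measurable_of_condIndep_of_ae_eq
    {Ω : Type*} [mΩ : MeasurableSpace Ω] (ℙ : Measure Ω) [IsProbabilityMeasure ℙ]
    {S : Type*} [TopologicalSpace S] [PolishSpace S] [mS : MeasurableSpace S]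
    [BorelSpace S]
    (U V : Ω → S) (hU : Measurable U) (hV : Measurable V)
    (𝓖 : MeasurableSpace Ω) (h𝓖 : 𝓖 ≤ mΩ)
    (hci : @CondIndepSigmaAlgebras Ω mΩ ℙ
      (MeasurableSpace.comap U mS) (MeasurableSpace.comap V mS) 𝓖)
    (hae : U =ᵐ[ℙ] V) :
    ∃ Utilde : Ω → S, Measurable[𝓖] Utilde ∧ U =ᵐ[ℙ] Utilde :=
  ae_measurable_of_condIndep_of_ae_eq_general (mΩ := mΩ) ℙ (mS := mS) U V hU 𝓖 h𝓖 hci hae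
end
end
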